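/- arXiv:2407.15001 — 6 statements merged into one kernel-verified Lean document; each statement's English description precedes it below -/
import Mathlib

section
/- Fix N ∈ ℕ with 2 ≤ |n⃗| ≤ N, fix i ∈ {1,…,p}, and let Q^{(i)}(x) = ∑_{l=0}^{n_i−1} C^{(i),l} (x+α_i+1)_l with C^{(i),l} = (−1)^{|n⃗|−1}(N+1−|n⃗|)! / [(n_i−1)! (β+1)_{|n⃗|−1} (α_i+β+|n⃗|)_{N+2−|n⃗|}] · [∏_{k=1}^p (α_k+β+|n⃗|)_{n_k}] / [∏_{k≠i} (α_k−α_i)_{n_k}] · (−n_i+1)_l (α_i+β+|n⃗|)_l / [l! (α_i+1)_l (α_i+β+N+2)_l] · ∏_{k≠i} (α_i−α_k−n_k+1)_l/(α_i−α_k+1)_l. Then for every j ∈ {0,…,|n⃗|−1}: ∑_{k=0}^N (β+N−k+1)_j Q^{(i)}(k) w_i(k) = [(−1)^{|n⃗|−1}(N+1−|n⃗|)! ∏_{m=1}^p (α_m+β+|n⃗|)_{n_m} / (N! (β+1+j)_{|n⃗|−1−j})] · [Γ(α_i+β+|n⃗|)(α_i+β+N+2)_j / ((n_i−1)! Γ(α_i+β+2+j)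 ∏_{m≠i}(α_m−α_i)_{n_m})] · ∑_{l=0}^{n_i−1} [(−n_i+1)_l (α_i+β+N+2+j)_l (α_i+β+|n⃗|)_l ∏_{m≠i}(α_i+1−α_m−n_m)_l] / [l! (α_i+β+N+2)_l (α_i+β+2+j)_l ∏_{m≠i}(α_i+1−α_m)_l]. -/
/-!
The moment of each basis polynomial `(x+α_i+1)_l` against `(β+N−k+1)_j w_i(k)` is evaluated in
closed form: writing `w_i(k) = C(N,k) (α_i+1)_k (β+1)_{N−k} / N!`, the products
`(α_i+1)_k (α_i+1+k)_l` and `(β+1)_{N−k} (β+1+N−k)_j` re-split as `(α_i+1)_l (α_i+l+1)_k` and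
`(β+1)_j (β+j+1)_{N−k}`, and the Chu–Vandermonde identity sums the result to
`(α_i+1)_l (β+1)_j (α_i+β+j+l+2)_N / N!`. Substituting into `Q^{(i)}`, the factors `(α_i+1)_l`,
`(β+1)_j` and `(α_i+β+|n⃗|)_{N+2−|n⃗|}` cancel against the denominator of `C^{(i),l}`, and
`(α_i+β+j+l+2)_N` is rewritten through `Γ` to give the stated form.
-/

open Finset

/-- The Pochhammer symbol (rising factorial) `(a)_m` for a real number `a`. -/
noncomputable def poch (a : ℝ) (m : ℕ) : ℝ := (ascPochhammer ℝ m).eval a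

open Polynomial in
theorem ascPochhammer_eval_add {R : Type*} [CommRing R] (a b : R) (n : ℕ) :
    (ascPochhammer R n).eval (a + b) =
      ∑ k ∈ range (n + 1), n.choose k * (ascPochhammer R k).eval a *
        (ascPochhammer R (n - k)).eval b := by
  have asc_eval (r : R) (m : ℕ) :
      (ascPochhammer R m).eval r = (-1) ^ m * (descPochhammer ℤ m).smeval (-r) := by
    rw [← aeval_eq_smeval, aeval_def, ← eval_map, descPochhammer_map,
      ← ascPochhammer_eval_neg_eq_descPochhammer, neg_neg]
  rw [asc_eval, neg_add, Ring.descPochhammer_smeval_add _ (Commute.all _ _), mul_sum,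
    Nat.sum_antidiagonal_eq_sum_range_succ_mk]
  refine sum_congr rfl fun k hk => ?_
  have hsign : (-1 : R) ^ n = (-1) ^ k * (-1) ^ (n - k) := by
    rw [← pow_add, Nat.add_sub_of_le (Nat.lt_succ_iff.1 (mem_range.1 hk))]
  rw [hsign, asc_eval, asc_eval]
  ring

theorem poch_add_eq_sum_choose (a b : ℝ) (n : ℕ) :
    poch (a + b) n = ∑ k ∈ range (n + 1), n.choose k * poch a k * poch b (n - k) :=
  ascPochhammer_eval_add a b n

theorem poch_add (a : ℝ) (m k : ℕ) : poch a (m + k) = poch a m * poch (a + m) k := by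
  simpa [poch, Polynomial.eval_comp] using
    (congrArg (Polynomial.eval a) (ascPochhammer_mul ℝ m k)).symm

theorem poch_mul_poch_add_comm (a : ℝ) (m k : ℕ) :
    poch a m * poch (a + m) k = poch a k * poch (a + k) m := by
  rw [← poch_add, ← poch_add, add_comm]

theorem poch_pos {a : ℝ} (ha : 0 < a) (m : ℕ) : 0 < poch a m := ascPochhammer_pos m a ha

theorem Real.Gamma_add_nat_eq_Gamma_mul_poch {a : ℝ} (ha : 0 < a) (m : ℕ) :
    Real.Gamma (a + m) = Real.Gamma a * poch a m := by
  induction m with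
  | zero => simp [poch]
  | succ m ih =>
    rw [Nat.cast_succ, ← add_assoc, Real.Gamma_add_one (by positivity), ih]
    simp only [poch, ascPochhammer_succ_eval]
    ring

theorem poch_add_nat_eq_Gamma_mul_poch_div {x : ℝ} (hx : 0 < x) (m l : ℕ) :
    poch (x + l) m = Real.Gamma (x + m) * poch (x + m) l / (Real.Gamma x * poch x l) := by
  rw [← Real.Gamma_add_nat_eq_Gamma_mul_poch (by positivity),
    ← Real.Gamma_add_nat_eq_Gamma_mul_poch hx, add_right_comm,
    Real.Gamma_add_nat_eq_Gamma_mul_poch (by positivity), mul_div_cancel_left₀]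
  exact (Real.Gamma_pos_of_pos (by positivity)).ne'

noncomputable def hahnWeight (a b : ℝ) (N k : ℕ) : ℝ :=
  Real.Gamma (a + k + 1) * Real.Gamma (b + N - k + 1) /
    (Real.Gamma (a + 1) * Real.Gamma ((k : ℝ) + 1) * Real.Gamma (b + 1) *
      Real.Gamma ((N : ℝ) - k + 1))

section HahnWeight

variable {a b : ℝ}

theorem hahnWeight_eq (ha : -1 < a) (hb : -1 < b) {N k : ℕ} (hk : k ≤ N) :
    hahnWeight a b N k = N.choose k * poch (a + 1) k * poch (b + 1) (N - k) / N.factorial := by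
  have hNk : (N : ℝ) - k = (N - k : ℕ) := (Nat.cast_sub hk).symm
  have hGa := Real.Gamma_add_nat_eq_Gamma_mul_poch (by linarith : 0 < a + 1) k
  have hGb := Real.Gamma_add_nat_eq_Gamma_mul_poch (by linarith : 0 < b + 1) (N - k)
  have hGa0 := (Real.Gamma_pos_of_pos (by linarith : 0 < a + 1)).ne'
  have hGb0 := (Real.Gamma_pos_of_pos (by linarith : 0 < b + 1)).ne'
  rw [hahnWeight, add_right_comm, hGa, add_sub_assoc, hNk, add_right_comm, hGb,
    Real.Gamma_nat_eq_factorial, Real.Gamma_nat_eq_factorial, Nat.cast_choose ℝ hk]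
  field_simp

theorem hahnWeight_moment (ha : -1 < a) (hb : -1 < b) (N j l : ℕ) :
    ∑ k ∈ range (N + 1), poch (b + N - k + 1) j * poch (k + a + 1) l * hahnWeight a b N k =
      poch (a + 1) l * poch (b + 1) j * poch (a + b + 2 + j + l) N / N.factorial := by
  have hterm : ∀ k ∈ range (N + 1),
      poch (b + N - k + 1) j * poch (k + a + 1) l * hahnWeight a b N k =
        poch (a + 1) l * poch (b + 1) j / N.factorial *
          (N.choose k * poch (a + 1 + l) k * poch (b + 1 + j) (N - k)) := by
    intro k hk
    have hkN : k ≤ N := Nat.lt_succ_iff.1 (mem_range.1 hk)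
    have hA := poch_mul_poch_add_comm (a + 1) k l
    have hB := poch_mul_poch_add_comm (b + 1) (N - k) j
    rw [Nat.cast_sub hkN] at hB
    rw [hahnWeight_eq ha hb hkN]
    calc _ = N.choose k / N.factorial * (poch (a + 1) k * poch (a + 1 + k) l) *
          (poch (b + 1) (N - k) * poch (b + 1 + (N - k)) j) := by ring_nf
      _ = _ := by rw [hA, hB]; ring
  rw [sum_congr rfl hterm, ← mul_sum, ← poch_add_eq_sum_choose]
  ring_nf

theorem hahnWeight_moment_sum (ha : -1 < a) (hb : -1 < b) (N j m : ℕ) (C : ℕ → ℝ) :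
    ∑ k ∈ range (N + 1), poch (b + N - k + 1) j *
        (∑ l ∈ range m, C l * poch (k + a + 1) l) * hahnWeight a b N k =
      ∑ l ∈ range m, C l *
        (poch (a + 1) l * poch (b + 1) j * poch (a + b + 2 + j + l) N / N.factorial) := by
  simp only [← hahnWeight_moment ha hb, mul_sum, sum_mul]
  rw [sum_comm]
  exact sum_congr rfl fun l _ => sum_congr rfl fun k _ => by ring

end HahnWeight

theorem hahn_typeI_pochhammer_moments_general
    (p : ℕ) (n : Fin p → ℕ)
    (S : ℕ)
    (α : Fin p → ℝ) (hα : ∀ i, -1 < α i)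
    (β : ℝ) (hβ : -1 < β) (N : ℕ) (hS2 : 2 ≤ S) (hSN : S ≤ N)
    (i : Fin p)
    (C : ℕ → ℝ)
    (hC : ∀ l, C l =
      (-1 : ℝ) ^ (S - 1) * (Nat.factorial (N + 1 - S) : ℝ) /
        ((Nat.factorial (n i - 1) : ℝ) * poch (β + 1) (S - 1) *
          poch (α i + β + S) (N + 2 - S)) *
      ((∏ k, poch (α k + β + S) (n k)) /
        ∏ k ∈ univ.erase i, poch (α k - α i) (n k)) *
      (poch (-(n i : ℝ) + 1) l * poch (α i + β + S) l /
        ((Nat.factorial l : ℝ) * poch (α i + 1) l * poch (α i + β + N + 2) l)) *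
      ∏ k ∈ univ.erase i, poch (α i - α k - n k + 1) l / poch (α i - α k + 1) l)
    (Q : ℝ → ℝ)
    (hQ : ∀ x, Q x = ∑ l ∈ range (n i), C l * poch (x + α i + 1) l)
    (w : ℕ → ℝ)
    (hw : ∀ k, w k =
      Real.Gamma (α i + k + 1) * Real.Gamma (β + N - k + 1) /
        (Real.Gamma (α i + 1) * Real.Gamma ((k : ℝ) + 1) * Real.Gamma (β + 1) *
          Real.Gamma ((N : ℝ) - k + 1))) :
    ∀ j < S,
      ∑ k ∈ range (N + 1), poch (β + N - k + 1) j * Q k * w k =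
        ((-1 : ℝ) ^ (S - 1) * (Nat.factorial (N + 1 - S) : ℝ) *
            (∏ m, poch (α m + β + S) (n m)) /
          ((Nat.factorial N : ℝ) * poch (β + 1 + j) (S - 1 - j))) *
        (Real.Gamma (α i + β + S) * poch (α i + β + N + 2) j /
          ((Nat.factorial (n i - 1) : ℝ) * Real.Gamma (α i + β + 2 + j) *
            ∏ m ∈ univ.erase i, poch (α m - α i) (n m))) *
        ∑ l ∈ range (n i),
          poch (-(n i : ℝ) + 1) l * poch (α i + β + N + 2 + j) l *
              poch (α i + β + S) l *
              (∏ m ∈ univ.erase i, poch (α i + 1 - α m - n m) l) /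
            ((Nat.factorial l : ℝ) * poch (α i + β + N + 2) l *
              poch (α i + β + 2 + j) l *
              ∏ m ∈ univ.erase i, poch (α i + 1 - α m) l) := by
  intro j hj
  have hS2' : (2 : ℝ) ≤ S := by exact_mod_cast hS2
  have hd : 0 < α i + β + S := by linarith [hα i]
  have hc : 0 < α i + β + 2 + j := by linarith [hα i, (Nat.cast_nonneg j : (0 : ℝ) ≤ j)]
  have hΓ : Real.Gamma (α i + β + 2 + j + N) =
      Real.Gamma (α i + β + S) * poch (α i + β + S) (N + 2 - S) * poch (α i + β + N + 2) j := by
    have he : α i + β + S + ((N + 2 - S : ℕ) : ℝ) = α i + β + N + 2 := by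
      rw [Nat.cast_sub (by omega)]; push_cast; ring
    rw [← Real.Gamma_add_nat_eq_Gamma_mul_poch hd, he,
      ← Real.Gamma_add_nat_eq_Gamma_mul_poch (by linarith)]
    ring_nf
  have hβ_split : poch (β + 1) (S - 1) = poch (β + 1) j * poch (β + 1 + j) (S - 1 - j) := by
    rw [← poch_add, Nat.add_sub_cancel' (by omega)]
  simp only [hQ, show ∀ k, w k = hahnWeight (α i) β N k from hw]
  rw [hahnWeight_moment_sum (hα i) hβ, mul_sum]
  refine sum_congr rfl fun l _ => ?_
  -- `ring` cannot cancel; the factors that do are `(α i + 1)_l (β + 1)_j (α i + β + S)_{N+2-S}`,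
  -- so multiply the right side by their product times its inverse
  have hcancel := mul_inv_cancel₀ (mul_ne_zero (mul_ne_zero
    (poch_pos (by linarith [hα i] : 0 < α i + 1) l).ne' (poch_pos (by linarith : 0 < β + 1) j).ne')
    (poch_pos hd (N + 2 - S)).ne')
  rw [hC, prod_div_distrib, hβ_split, poch_add_nat_eq_Gamma_mul_poch_div hc, hΓ]
  refine Eq.trans ?_ ((congrArg (_ * ·) hcancel).trans (mul_one _))
  ring_nf

/-- Evaluation of the discrete integral of the type I Hahn polynomial `Q^{(i)}`
against the Pochhammer basis `(β+N−k+1)_j` with the Hahn weight `w_i`. -/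
theorem hahn_typeI_pochhammer_moments
    (p : ℕ) (hp : 0 < p) (n : Fin p → ℕ) (hn : ∀ i, 0 < n i)
    (S : ℕ) (hS : S = ∑ i, n i)
    (α : Fin p → ℝ) (hα : ∀ i, -1 < α i)
    (hαint : ∀ i j, i ≠ j → ∀ z : ℤ, α i - α j ≠ (z : ℝ))
    (β : ℝ) (hβ : -1 < β) (N : ℕ) (hS2 : 2 ≤ S) (hSN : S ≤ N)
    (i : Fin p)
    (C : ℕ → ℝ)
    (hC : ∀ l, C l =
      (-1 : ℝ) ^ (S - 1) * (Nat.factorial (N + 1 - S) : ℝ) /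
        ((Nat.factorial (n i - 1) : ℝ) * poch (β + 1) (S - 1) *
          poch (α i + β + S) (N + 2 - S)) *
      ((∏ k, poch (α k + β + S) (n k)) /
        ∏ k ∈ univ.erase i, poch (α k - α i) (n k)) *
      (poch (-(n i : ℝ) + 1) l * poch (α i + β + S) l /
        ((Nat.factorial l : ℝ) * poch (α i + 1) l * poch (α i + β + N + 2) l)) *
      ∏ k ∈ univ.erase i, poch (α i - α k - n k + 1) l / poch (α i - α k + 1) l)
    (Q : ℝ → ℝ)
    (hQ : ∀ x, Q x = ∑ l ∈ range (n i), C l * poch (x + α i + 1) l)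
    (w : ℕ → ℝ)
    (hw : ∀ k, w k =
      Real.Gamma (α i + k + 1) * Real.Gamma (β + N - k + 1) /
        (Real.Gamma (α i + 1) * Real.Gamma ((k : ℝ) + 1) * Real.Gamma (β + 1) *
          Real.Gamma ((N : ℝ) - k + 1))) :
    ∀ j < S,
      ∑ k ∈ range (N + 1), poch (β + N - k + 1) j * Q k * w k =
        ((-1 : ℝ) ^ (S - 1) * (Nat.factorial (N + 1 - S) : ℝ) *
            (∏ m, poch (α m + β + S) (n m)) /
          ((Nat.factorial N : ℝ) * poch (β + 1 + j) (S - 1 - j))) *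
        (Real.Gamma (α i + β + S) * poch (α i + β + N + 2) j /
          ((Nat.factorial (n i - 1) : ℝ) * Real.Gamma (α i + β + 2 + j) *
            ∏ m ∈ univ.erase i, poch (α m - α i) (n m))) *
        ∑ l ∈ range (n i),
          poch (-(n i : ℝ) + 1) l * poch (α i + β + N + 2 + j) l *
              poch (α i + β + S) l *
              (∏ m ∈ univ.erase i, poch (α i + 1 - α m - n m) l) /
            ((Nat.factorial l : ℝ) * poch (α i + β + N + 2) l *
              poch (α i + β + 2 + j) l *
              ∏ m ∈ univ.erase i, poch (α i + 1 - α m) l) :=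
  hahn_typeI_pochhammer_moments_general p n S α hα β hβ N hS2 hSN i C hC Q hQ w hw
end

section
/- Let N ∈ ℕ, let f : {0,…,N} → ℂ be any function, and define (M_N f)(s) = ∑_{k=0}^N f(k) Γ(s+k)/k! for complex s. Let r be a real number with N/2 < r < N/2 + 1. Then for every x ∈ {0,…,N}: f(x) = (2πi)^{−1} ∮_{|s+N/2|=r} (M_N f)(s) · Γ(x+1)/Γ(x+s+1) ds. -/
/-!
For `k ≤ x` the kernel `Γ(s + k) / Γ(s + x + 1)` equals `∏_{j=k}^{x} (s + j)⁻¹`, whose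
partial fraction coefficients are the Lagrange nodal weights of the nodes `-k, …, -x`. All these
poles lie inside the circle, so the integral is `2πi` times the sum of the nodal weights, which is
the coefficient of `X ^ (#nodes - 1)` in the interpolant of the constant `1`: it is `1` for the
single node `k = x` and `0` otherwise. For `k > x` the kernel is a polynomial and integrates
to `0`.
-/

open Finset Metric Complex Real

namespace Lagrange

variable {F ι : Type*} [Field F] [DecidableEq ι] {s : Finset ι} {v : ι → F}

theorem prod_inv_sub_eq_sum_nodalWeight_mul_inv_sub (hvs : Set.InjOn v s) (hs : s.Nonempty)
    {x : F} (hx : ∀ i ∈ s, x ≠ v i) :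
    ∏ i ∈ s, (x - v i)⁻¹ = ∑ i ∈ s, nodalWeight s v i * (x - v i)⁻¹ := by
  have h := eval_interpolate_not_at_node (1 : ι → F) hx
  simp only [interpolate_one hvs hs, Polynomial.eval_one, Pi.one_apply, mul_one,
    eval_nodal] at h
  rw [prod_inv_distrib, inv_eq_of_mul_eq_one_right h.symm]

theorem sum_nodalWeight (hvs : Set.InjOn v s) :
    ∑ i ∈ s, nodalWeight s v i = if #s = 1 then 1 else 0 := by
  rcases s.eq_empty_or_nonempty with rfl | hs
  · simp
  have h := coeff_eq_sum hvs (P := 1) (by simpa [Polynomial.degree_one] using hs.card_pos)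
  have hcard : #s - 1 = 0 ↔ #s = 1 := by have := hs.card_pos; omega
  simp only [Polynomial.coeff_one, Polynomial.eval_one, one_div, hcard] at h
  simp only [nodalWeight, prod_inv_distrib, h]

end Lagrange

open Lagrange

theorem circleIntegral.integral_prod_inv_sub_of_mem_ball {ι : Type*} [DecidableEq ι]
    {s : Finset ι} {v : ι → ℂ} (hvs : Set.InjOn v s) (hs : s.Nonempty) {c : ℂ} {R : ℝ}
    (hv : ∀ i ∈ s, v i ∈ ball c R) :
    (∮ z in C(c, R), ∏ i ∈ s, (z - v i)⁻¹) = if #s = 1 then 2 * π * I else 0 := by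
  obtain ⟨i₀, hi₀⟩ := hs
  have hR : 0 ≤ R := (pos_of_mem_ball (hv i₀ hi₀)).le
  have hoff : ∀ z ∈ sphere c R, ∀ i ∈ s, z ≠ v i := by
    rintro z hz i hi rfl
    exact (mem_ball.1 (hv i hi)).ne (mem_sphere.1 hz)
  have hint : ∀ i ∈ s, CircleIntegrable (fun z => nodalWeight s v i * (z - v i)⁻¹) c R :=
    fun i hi => (continuousOn_const.mul ((continuousOn_id.sub continuousOn_const).inv₀
      fun z hz => sub_ne_zero.2 (hoff z hz i hi))).circleIntegrable hR
  rw [circleIntegral.integral_congr hR fun z hz =>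
      prod_inv_sub_eq_sum_nodalWeight_mul_inv_sub hvs ⟨i₀, hi₀⟩ (hoff z hz),
    circleIntegral.integral_fun_sum hint]
  rw [sum_congr rfl fun i hi => by
    rw [circleIntegral.integral_const_mul, circleIntegral.integral_sub_inv_of_mem_ball (hv i hi)],
    ← sum_mul, sum_nodalWeight hvs]
  split_ifs <;> simp

theorem add_natCast_ne_neg_natCast {R : Type*} [CommRing R] {z : R} (hz : ∀ m : ℕ, z ≠ -m)
    (k m : ℕ) : z + k ≠ -m :=
  fun h => hz (m + k) (by push_cast; linear_combination h)

namespace Complex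

theorem Gamma_add_nat_eq_mul_prod_Ico {s : ℂ} (hs : ∀ m : ℕ, s ≠ -m) {k n : ℕ} (hkn : k ≤ n) :
    Gamma (s + n) = Gamma (s + k) * ∏ j ∈ Ico k n, (s + j) := by
  induction n, hkn using Nat.le_induction with
  | base => simp
  | succ n hkn ih =>
    have hsn : s + n ≠ 0 := by simpa using add_natCast_ne_neg_natCast hs n 0
    rw [Nat.cast_succ, ← add_assoc, Gamma_add_one _ hsn, ih, prod_Ico_succ_top hkn]
    ring

theorem Gamma_add_nat_div_Gamma_add_nat_of_le {s : ℂ} (hs : ∀ m : ℕ, s ≠ -m) {k n : ℕ}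
    (hkn : k ≤ n) : Gamma (s + k) / Gamma (s + n) = ∏ j ∈ Ico k n, (s + j)⁻¹ := by
  rw [Gamma_add_nat_eq_mul_prod_Ico hs hkn, prod_inv_distrib, div_mul_eq_div_div,
    div_self (Gamma_ne_zero (add_natCast_ne_neg_natCast hs k)), one_div]

theorem Gamma_add_nat_div_Gamma_add_nat_of_ge {s : ℂ} (hs : ∀ m : ℕ, s ≠ -m) {k n : ℕ}
    (hnk : n ≤ k) : Gamma (s + k) / Gamma (s + n) = ∏ j ∈ Ico n k, (s + j) := by
  rw [Gamma_add_nat_eq_mul_prod_Ico hs hnk,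
    mul_div_cancel_left₀ _ (Gamma_ne_zero (add_natCast_ne_neg_natCast hs n))]

theorem circleIntegrable_Gamma_add_nat_div_Gamma_add_nat {c : ℂ} {R : ℝ} (hR : 0 ≤ R)
    (hsphere : ∀ m : ℕ, -(m : ℂ) ∉ sphere c R) (k n : ℕ) :
    CircleIntegrable (fun z => Gamma (z + k) / Gamma (z + n)) c R := by
  refine ContinuousOn.circleIntegrable hR fun z hz => ContinuousAt.continuousWithinAt ?_
  have hz : ∀ m : ℕ, z ≠ -m := fun m h => hsphere m (h ▸ hz)
  have hGamma (j : ℕ) : DifferentiableAt ℂ (fun z => Gamma (z + j)) z :=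
    (differentiableAt_Gamma _ (add_natCast_ne_neg_natCast hz j)).comp z
      (differentiableAt_id.add_const _)
  exact ((hGamma k).div (hGamma n)
    (Gamma_ne_zero (add_natCast_ne_neg_natCast hz n))).continuousAt

theorem circleIntegral_Gamma_add_nat_div_Gamma_add_nat_succ {c : ℂ} {R : ℝ} {n : ℕ}
    (hsphere : ∀ m : ℕ, -(m : ℂ) ∉ sphere c R) (hball : ∀ j ≤ n, -(j : ℂ) ∈ ball c R) (k : ℕ) :
    (∮ z in C(c, R), Gamma (z + k) / Gamma (z + (n + 1 : ℕ))) =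
      if k = n then 2 * π * I else 0 := by
  have hR : 0 ≤ R := (pos_of_mem_ball (hball 0 n.zero_le)).le
  have hz : ∀ z ∈ sphere c R, ∀ m : ℕ, z ≠ -m := fun z hz m h => hsphere m (h ▸ hz)
  rcases le_or_gt k n with hkn | hnk
  · have hnodes : Set.InjOn (fun j : ℕ => -(j : ℂ)) (Ico k (n + 1)) :=
      fun i _ j _ h => by simpa using h
    have hprod : Set.EqOn (fun z => Gamma (z + k) / Gamma (z + (n + 1 : ℕ)))
        (fun z => ∏ j ∈ Ico k (n + 1), (z - -(j : ℂ))⁻¹) (sphere c R) := fun z hz' => by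
      simp only [sub_neg_eq_add]
      exact Gamma_add_nat_div_Gamma_add_nat_of_le (hz z hz') (by omega)
    rw [circleIntegral.integral_congr hR hprod,
      circleIntegral.integral_prod_inv_sub_of_mem_ball hnodes ⟨k, by simp; omega⟩
        fun j hj => hball j (by simp at hj; omega)]
    simp only [Nat.card_Ico, show n + 1 - k = 1 ↔ k = n by omega]
  · rw [if_neg hnk.ne', circleIntegral.integral_congr hR fun z hz' =>
      Gamma_add_nat_div_Gamma_add_nat_of_ge (hz z hz') (by omega : n + 1 ≤ k)]
    exact (Differentiable.diffContOnCl (by fun_prop)).circleIntegral_eq_zero hR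

end Complex

theorem dist_neg_natCast_neg_natCast_div_two (m N : ℕ) :
    dist (-(m : ℂ)) (-(N : ℂ) / 2) = |(m : ℝ) - N / 2| := by
  rw [dist_eq_norm, ← norm_neg, ← Real.norm_eq_abs, ← Complex.norm_real]
  push_cast
  ring_nf

theorem neg_natCast_mem_ball_neg_natCast_div_two {N j : ℕ} {r : ℝ} (hr : (N : ℝ) / 2 < r)
    (hj : j ≤ N) : -(j : ℂ) ∈ ball (-(N : ℂ) / 2) r := by
  have hj' : (j : ℝ) ≤ N := by exact_mod_cast hj
  rw [mem_ball, dist_neg_natCast_neg_natCast_div_two, abs_sub_lt_iff]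
  constructor <;> linarith [(j.cast_nonneg : (0 : ℝ) ≤ j)]

theorem neg_natCast_notMem_sphere_neg_natCast_div_two {N : ℕ} {r : ℝ} (hr1 : (N : ℝ) / 2 < r)
    (hr2 : r < (N : ℝ) / 2 + 1) (m : ℕ) : -(m : ℂ) ∉ sphere (-(N : ℂ) / 2) r := by
  intro h
  rw [mem_sphere] at h
  rcases le_or_gt m N with hm | hm
  · exact (mem_ball.1 (neg_natCast_mem_ball_neg_natCast_div_two hr1 hm)).ne h
  · have hm' : (N : ℝ) + 1 ≤ m := by exact_mod_cast hm
    rw [dist_neg_natCast_neg_natCast_div_two, abs_of_nonneg (by linarith)] at h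
    linarith

/-- Inversion formula for the discrete analogue of the Mellin transform on the
lattice `{0,…,N}`: for `x ∈ {0,…,N}`,
`f x = (2πi)⁻¹ ∮ (M_N f)(s) Γ(x+1)/Γ(x+s+1) ds` over a circle centred at `−N/2`
of radius `r ∈ (N/2, N/2+1)`, which encloses `[−N,0]` once. -/
theorem discrete_mellin_inversion
    (N : ℕ) (f : ℕ → ℂ) (r : ℝ)
    (hr1 : (N : ℝ) / 2 < r) (hr2 : r < (N : ℝ) / 2 + 1) :
    ∀ x : ℕ, x ≤ N →
      f x = (2 * Real.pi * Complex.I)⁻¹ *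
        circleIntegral
          (fun s : ℂ =>
            (∑ k ∈ range (N + 1),
              f k * Complex.Gamma (s + k) / (Nat.factorial k : ℂ)) *
            Complex.Gamma ((x : ℂ) + 1) / Complex.Gamma ((x : ℂ) + s + 1))
          (-(N : ℂ) / 2) r := by
  intro x hx
  have hsphere := neg_natCast_notMem_sphere_neg_natCast_div_two hr1 hr2
  have hr : 0 ≤ r := by linarith [(by positivity : (0 : ℝ) ≤ N / 2)]
  have hintegrand : (fun s : ℂ => (∑ k ∈ range (N + 1),
        f k * Complex.Gamma (s + k) / (Nat.factorial k : ℂ)) *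
        Complex.Gamma ((x : ℂ) + 1) / Complex.Gamma ((x : ℂ) + s + 1)) =
      fun s => ∑ k ∈ range (N + 1), f k * x.factorial / k.factorial *
        (Complex.Gamma (s + k) / Complex.Gamma (s + (x + 1 : ℕ))) := by
    funext s
    rw [Complex.Gamma_nat_eq_factorial, sum_mul, sum_div]
    refine sum_congr rfl fun k _ => ?_
    push_cast
    ring_nf
  rw [hintegrand, circleIntegral.integral_fun_sum (f := fun k z =>
      f k * x.factorial / k.factorial * (Complex.Gamma (z + k) / Complex.Gamma (z + (x + 1 : ℕ))))
    fun k _ => (Complex.circleIntegrable_Gamma_add_nat_div_Gamma_add_nat hr hsphere k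
      (x + 1)).const_fun_smul]
  simp_rw [circleIntegral.integral_const_mul,
    Complex.circleIntegral_Gamma_add_nat_div_Gamma_add_nat_succ hsphere
      fun j hj => neg_natCast_mem_ball_neg_natCast_div_two hr1 (hj.trans hx),
    mul_ite, mul_zero, sum_ite_eq', if_pos (mem_range.2 (Nat.lt_succ_of_le hx))]
  field_simp
  exact (mul_div_cancel_right₀ _ (Nat.cast_ne_zero.2 x.factorial_ne_zero)).symm
end

section
/- Let c ∈ ℝ and r > 0 be such that |α_i + k − c| < r for every i ∈ {1,…,p} and k ∈ {0,…,n_i−1}, and let φ : ℂ → ℂ be analytic on the closed disc {t : |t−c| ≤ r} with φ(α_i+k) ≠ 0 for all such i, k. Given complex polynomials A_1,…,A_p with deg A_i ≤ n_i − 1, there exists a unique complex polynomial q with deg q ≤ |n⃗| − 1 such that for every real x > 0: ∑_{i=1}^p A_i(x) x^{α_i} = (2πi)^{−1} ∮_{|t−c|=r} q(t) φ(t) x^t / ∏_{i=1}^p (α_i − t)_{n_i} dt, where x^t = exp(t·log x). -/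
open Finset

/-- The Pochhammer symbol (rising factorial) `(a)_m` for a complex number `a`. -/
noncomputable def pochC (a : ℂ) (m : ℕ) : ℂ := (ascPochhammer ℂ m).eval a

/-!
Write `ρ_{i,k} = α_i + k` for `k < n_i`. These `|n|` reals are pairwise distinct because the
`α_i` are pairwise incongruent modulo `ℤ`, and they lie inside the circle. Since
`(α_i - t)_{n_i} = (-1)^{n_i} ∏_k (t - ρ_{i,k})`, partial fractions and Cauchy's formula turn the
contour integral into `∑ w_{i,k} q(ρ_{i,k}) x^{ρ_{i,k}}` with nonzero weights
`w_{i,k} = ± φ(ρ_{i,k}) / ∏_{(j,l) ≠ (i,k)} (ρ_{i,k} - ρ_{j,l})`, while the linear form is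
`∑ a_{i,k} x^{ρ_{i,k}}` with `a_{i,k}` the `k`-th coefficient of `A_i`. The functions
`y ↦ e^{ρ y}` are distinct characters of `ℝ`, hence linearly independent, so the identity holds
for all `x > 0` iff `q(ρ_{i,k}) = a_{i,k} / w_{i,k}` at every node; Lagrange interpolation gives
exactly one such `q` of degree `< |n|`.
-/

open Metric Polynomial Lagrange Complex Real

theorem Polynomial.natDegree_le_sub_one_iff_degree_lt {R : Type*} [Semiring R] {q : R[X]} {S : ℕ}
    (hS : 0 < S) : q.natDegree ≤ S - 1 ↔ q.degree < S := by
  rcases eq_or_ne q 0 with rfl | hq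
  · simp
  · rw [← natDegree_lt_iff_degree_lt hq]
    omega

theorem pochC_sub_eq_prod (a t : ℂ) (n : ℕ) :
    pochC (a - t) n = (-1) ^ n * ∏ k ∈ range n, (t - (a + k)) := by
  simp only [pochC, ← neg_sub t a, ascPochhammer_eval_neg_eq_descPochhammer,
    descPochhammer_eval_eq_prod_range, sub_sub]

theorem Lagrange.inv_prod_sub_eq_sum_nodalWeight_mul_inv {F ι : Type*} [Field F] [DecidableEq ι]
    {s : Finset ι} {v : ι → F} (hvs : Set.InjOn v s) (hs : s.Nonempty) {x : F}
    (hx : ∀ i ∈ s, x ≠ v i) :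
    (∏ i ∈ s, (x - v i))⁻¹ = ∑ i ∈ s, nodalWeight s v i * (x - v i)⁻¹ := by
  refine inv_eq_of_mul_eq_one_right ?_
  simpa [interpolate_one hvs hs, eval_nodal] using (eval_interpolate_not_at_node 1 hx).symm

theorem circleIntegral.integral_finsetSum {ι : Type*} (s : Finset ι) {f : ι → ℂ → ℂ} {c : ℂ} {R : ℝ}
    (hf : ∀ i ∈ s, CircleIntegrable (f i) c R) :
    (∮ z in C(c, R), ∑ i ∈ s, f i z) = ∑ i ∈ s, ∮ z in C(c, R), f i z := by
  simp only [circleIntegral, smul_eq_mul, mul_sum]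
  exact intervalIntegral.integral_finsetSum fun i hi => by simpa [smul_eq_mul] using (hf i hi).out

theorem circleIntegral_div_prod_sub_eq_sum {ι : Type*} [DecidableEq ι] {s : Finset ι}
    (hs : s.Nonempty) {v : ι → ℂ} (hvs : Set.InjOn v s) {c : ℂ} {R : ℝ}
    (hv : ∀ i ∈ s, v i ∈ ball c R) {f : ℂ → ℂ} (hf : DiffContOnCl ℂ f (ball c R)) :
    (∮ t in C(c, R), f t / ∏ i ∈ s, (t - v i)) =
      2 * π * I * ∑ i ∈ s, nodalWeight s v i * f (v i) := by
  obtain ⟨i₀, hi₀⟩ := hs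
  have hR : 0 < R := pos_of_mem_ball (hv i₀ hi₀)
  have hf_sphere : ContinuousOn f (sphere c R) :=
    hf.continuousOn.mono (closure_ball c hR.ne' ▸ sphere_subset_closedBall)
  have hoff : ∀ t ∈ sphere c R, ∀ i ∈ s, t ≠ v i := fun t ht i hi h =>
    (mem_sphere.mp ht ▸ h ▸ mem_ball.mp (hv i hi)).false
  have hsplit : Set.EqOn (fun t => f t / ∏ i ∈ s, (t - v i))
      (fun t => ∑ i ∈ s, nodalWeight s v i * ((t - v i)⁻¹ * f t)) (sphere c R) := fun t ht => by
    simp only [div_eq_inv_mul, inv_prod_sub_eq_sum_nodalWeight_mul_inv hvs ⟨i₀, hi₀⟩ (hoff t ht),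
      sum_mul, mul_assoc]
  have hint : ∀ i ∈ s, CircleIntegrable (fun t => nodalWeight s v i * ((t - v i)⁻¹ * f t)) c R :=
    fun i hi => ContinuousOn.circleIntegrable hR.le <| continuousOn_const.mul <|
      ((continuousOn_id.sub continuousOn_const).inv₀ fun t ht => sub_ne_zero.mpr
        (hoff t ht i hi)).mul hf_sphere
  rw [circleIntegral.integral_congr hR.le hsplit, circleIntegral.integral_finsetSum s hint, mul_sum]
  refine sum_congr rfl fun i hi => ?_
  rw [circleIntegral.integral_const_mul]
  have hcauchy : (∮ t in C(c, R), (t - v i)⁻¹ * f t) = 2 * π * I * f (v i) := by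
    simpa only [smul_eq_mul] using hf.circleIntegral_sub_inv_smul (hv i hi)
  rw [hcauchy]
  ring

theorem linearIndependent_cexp_ofReal_mul {ι : Type*} {ρ : ι → ℝ} (hρ : Function.Injective ρ) :
    LinearIndependent ℂ fun i (y : ℝ) => cexp (ρ i * y) := by
  let χ : ι → Multiplicative ℝ →* ℂ := fun i =>
    { toFun := fun y => cexp (ρ i * y.toAdd)
      map_one' := by simp
      map_mul' := fun y z => by simp [mul_add, Complex.exp_add] }
  have hχ : Function.Injective χ := fun i j h => hρ <| Real.exp_injective <| by
    have h1 := DFunLike.congr_fun h (Multiplicative.ofAdd 1)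
    simp only [χ, MonoidHom.coe_mk, OneHom.coe_mk, toAdd_ofAdd, ofReal_one, mul_one] at h1
    rwa [← ofReal_exp, ← ofReal_exp, ofReal_inj] at h1
  exact (linearIndependent_monoidHom (Multiplicative ℝ) ℂ).comp χ hχ

theorem sum_mul_cexp_log_eq_iff {ι : Type*} [Fintype ι] {ρ : ι → ℝ} (hρ : Function.Injective ρ)
    (a b : ι → ℂ) :
    (∀ x : ℝ, 0 < x → ∑ i, a i * cexp (ρ i * Real.log x) = ∑ i, b i * cexp (ρ i * Real.log x)) ↔
      a = b := by
  refine ⟨fun h => ?_, fun h _ _ => h ▸ rfl⟩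
  have hzero := Fintype.linearIndependent_iff.mp (linearIndependent_cexp_ofReal_mul hρ) (a - b) <|
    funext fun y => by
      simpa [sub_mul, Real.log_exp, sub_eq_zero] using h (Real.exp y) (Real.exp_pos y)
  exact funext fun i => sub_eq_zero.mp (hzero i)

theorem ofReal_rpow_eq_cexp {x : ℝ} (hx : 0 < x) (a : ℝ) :
    ((x ^ a : ℝ) : ℂ) = cexp (a * Real.log x) := by
  rw [Real.rpow_def_of_pos hx, ofReal_exp, mul_comm, ofReal_mul]

section TypeI

variable {p : ℕ} (n : Fin p → ℕ) (α : Fin p → ℝ)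

def typeIExponent (m : (i : Fin p) × Fin (n i)) : ℝ := α m.1 + m.2

noncomputable def typeIResidueWeight (φ : ℂ → ℂ) (m : (i : Fin p) × Fin (n i)) : ℂ :=
  (-1) ^ (∑ i, n i) * nodalWeight univ (fun m => (typeIExponent n α m : ℂ)) m *
    φ (typeIExponent n α m)

variable {n α}

theorem typeIExponent_injective (hα : ∀ i j, i ≠ j → ∀ z : ℤ, α i - α j ≠ z) :
    Function.Injective (typeIExponent n α) := by
  rintro ⟨i, k⟩ ⟨j, l⟩ h
  simp only [typeIExponent] at h
  obtain rfl | hij := eq_or_ne i j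
  · rw [Fin.ext (by exact_mod_cast add_left_cancel h : (k : ℕ) = l)]
  · exact absurd (by push_cast; linarith : α i - α j = (((l : ℕ) - (k : ℕ) : ℤ) : ℝ))
      (hα i j hij _)

theorem typeIResidueWeight_ne_zero (hρ : Function.Injective (typeIExponent n α)) {φ : ℂ → ℂ}
    (hφ : ∀ i, ∀ k < n i, φ ((α i : ℂ) + k) ≠ 0) (m : (i : Fin p) × Fin (n i)) :
    typeIResidueWeight n α φ m ≠ 0 := by
  refine mul_ne_zero (mul_ne_zero (by simp) ?_) ?_
  · exact nodalWeight_ne_zero (ofReal_injective.comp hρ).injOn (mem_univ m)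
  · simpa [typeIExponent] using hφ m.1 m.2 m.2.isLt

theorem prod_pochC_sub_eq (t : ℂ) :
    ∏ i, pochC (α i - t) (n i) = (-1) ^ (∑ i, n i) * ∏ m, (t - typeIExponent n α m) := by
  simp only [pochC_sub_eq_prod, prod_mul_distrib, prod_pow_eq_pow_sum, ← univ_sigma_univ,
    prod_sigma, typeIExponent]
  congr 1
  refine prod_congr rfl fun i _ => ?_
  rw [← Fin.prod_univ_eq_prod_range]
  push_cast
  rfl

theorem sum_eval_mul_rpow_eq (A : Fin p → ℂ[X]) (hA : ∀ i, (A i).natDegree < n i) {x : ℝ}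
    (hx : 0 < x) :
    ∑ i, (A i).eval (x : ℂ) * ((x ^ α i : ℝ) : ℂ) =
      ∑ m, (A m.1).coeff m.2 * cexp (typeIExponent n α m * Real.log x) := by
  rw [← univ_sigma_univ, sum_sigma]
  refine sum_congr rfl fun i _ => ?_
  rw [eval_eq_sum_range' (hA i), sum_mul, ← Fin.sum_univ_eq_sum_range]
  refine sum_congr rfl fun k _ => ?_
  rw [mul_assoc, typeIExponent, ← ofReal_rpow_eq_cexp hx, Real.rpow_add hx, Real.rpow_natCast]
  push_cast
  ring

theorem circleIntegral_typeI_eq_sum [Nonempty ((i : Fin p) × Fin (n i))]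
    (hρ : Function.Injective (typeIExponent n α)) {c : ℂ} {r : ℝ}
    (hball : ∀ m, (typeIExponent n α m : ℂ) ∈ ball c r) {φ : ℂ → ℂ}
    (hφ : DifferentiableOn ℂ φ (closedBall c r)) (q : ℂ[X]) (x : ℝ) :
    (2 * π * I)⁻¹ * (∮ t in C(c, r), q.eval t * φ t * cexp (t * Real.log x) /
        ∏ i, pochC ((α i : ℂ) - t) (n i)) =
      ∑ m, typeIResidueWeight n α φ m * q.eval (typeIExponent n α m : ℂ) *
        cexp (typeIExponent n α m * Real.log x) := by
  have hf : DiffContOnCl ℂ (fun t => q.eval t * φ t * cexp (t * Real.log x) * (-1) ^ (∑ i, n i))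
      (ball c r) :=
    DifferentiableOn.diffContOnCl <| DifferentiableOn.mono (t := closedBall c r)
      (by fun_prop) closure_ball_subset_closedBall
  simp_rw [prod_pochC_sub_eq, div_mul_eq_div_div, div_eq_mul_inv _ ((-1 : ℂ) ^ (∑ i, n i)),
    ← inv_pow, inv_neg_one]
  rw [circleIntegral_div_prod_sub_eq_sum (v := fun m => (typeIExponent n α m : ℂ)) univ_nonempty
    (ofReal_injective.comp hρ).injOn (fun m _ => hball m) hf, ← mul_assoc,
    inv_mul_cancel₀ two_pi_I_ne_zero, one_mul]
  refine sum_congr rfl fun m _ => ?_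
  simp only [typeIResidueWeight]
  ring

theorem typeI_sum_eq_circleIntegral_iff [Nonempty ((i : Fin p) × Fin (n i))]
    (hρ : Function.Injective (typeIExponent n α)) {c : ℂ} {r : ℝ}
    (hball : ∀ m, (typeIExponent n α m : ℂ) ∈ ball c r) {φ : ℂ → ℂ}
    (hφ : DifferentiableOn ℂ φ (closedBall c r)) (hφne : ∀ i, ∀ k < n i, φ ((α i : ℂ) + k) ≠ 0)
    (A : Fin p → ℂ[X]) (hA : ∀ i, (A i).natDegree < n i) (q : ℂ[X]) :
    (∀ x : ℝ, 0 < x → ∑ i, (A i).eval (x : ℂ) * ((x ^ α i : ℝ) : ℂ) =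
        (2 * π * I)⁻¹ * (∮ t in C(c, r), q.eval t * φ t * cexp (t * Real.log x) /
          ∏ i, pochC ((α i : ℂ) - t) (n i))) ↔
      ∀ m, q.eval (typeIExponent n α m : ℂ) = (A m.1).coeff m.2 / typeIResidueWeight n α φ m := by
  calc _ ↔ ∀ x : ℝ, 0 < x →
          ∑ m, (A m.1).coeff m.2 * cexp (typeIExponent n α m * Real.log x) =
            ∑ m, typeIResidueWeight n α φ m * q.eval (typeIExponent n α m : ℂ) *
              cexp (typeIExponent n α m * Real.log x) :=
        forall₂_congr fun x hx => by
          rw [sum_eval_mul_rpow_eq A hA hx, circleIntegral_typeI_eq_sum hρ hball hφ]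
    _ ↔ (fun m => (A m.1).coeff m.2) =
          fun m => typeIResidueWeight n α φ m * q.eval (typeIExponent n α m : ℂ) :=
        sum_mul_cexp_log_eq_iff hρ _ _
    _ ↔ _ := funext_iff.trans <| forall_congr' fun m => by
        rw [eq_div_iff (typeIResidueWeight_ne_zero hρ hφne m), mul_comm, eq_comm]

end TypeI

theorem typeI_contour_representation_general
    (p : ℕ) (hp : 0 < p) (n : Fin p → ℕ) (hn : ∀ i, 0 < n i)
    (S : ℕ) (hS : S = ∑ i, n i)
    (α : Fin p → ℝ)
    (hαint : ∀ i j, i ≠ j → ∀ z : ℤ, α i - α j ≠ (z : ℝ))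
    (c r : ℝ)
    (henc : ∀ i, ∀ k < n i, |α i + k - c| < r)
    (φ : ℂ → ℂ)
    (hφ : AnalyticOnNhd ℂ φ (Metric.closedBall (c : ℂ) r))
    (hφne : ∀ i, ∀ k < n i, φ ((α i : ℂ) + k) ≠ 0)
    (A : Fin p → Polynomial ℂ) (hA : ∀ i, (A i).natDegree ≤ n i - 1) :
    ∃! q : Polynomial ℂ, q.natDegree ≤ S - 1 ∧
      ∀ x : ℝ, 0 < x →
        ∑ i, (A i).eval (x : ℂ) * ((x ^ α i : ℝ) : ℂ) =
          (2 * Real.pi * Complex.I)⁻¹ *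
            circleIntegral
              (fun t : ℂ => q.eval t * φ t * Complex.exp (t * Real.log x) /
                ∏ i, pochC ((α i : ℂ) - t) (n i))
              (c : ℂ) r := by
  have : Nonempty ((i : Fin p) × Fin (n i)) := ⟨⟨⟨0, hp⟩, ⟨0, hn _⟩⟩⟩
  have hρ := typeIExponent_injective (n := n) hαint
  have hball : ∀ m, (typeIExponent n α m : ℂ) ∈ ball (c : ℂ) r := fun m => by
    rw [mem_ball, Complex.dist_eq, ← ofReal_sub, norm_real, Real.norm_eq_abs]
    exact henc m.1 m.2 m.2.isLt
  have hcard : #(univ : Finset ((i : Fin p) × Fin (n i))) = S := by simp [hS]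
  have hSpos : 0 < S := hcard ▸ card_pos.mpr univ_nonempty
  have hA' : ∀ i, (A i).natDegree < n i := fun i => by have := hA i; have := hn i; omega
  refine (existsUnique_congr fun q => ?_).mpr (existsUnique_eq (a' := interpolate univ
    (fun m => (typeIExponent n α m : ℂ)) fun m => (A m.1).coeff m.2 / typeIResidueWeight n α φ m))
  rw [natDegree_le_sub_one_iff_degree_lt hSpos, typeI_sum_eq_circleIntegral_iff hρ hball
    hφ.differentiableOn hφne A hA' q, ← hcard]
  exact (and_congr_right' (by simp only [mem_univ, forall_const])).trans
    (eq_interpolate_iff _ (ofReal_injective.comp hρ).injOn)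

/-- Any type I linear form `∑ A_i(x) x^{α_i}` has a unique contour-integral
representation `(2πi)⁻¹ ∮ q(t) φ(t) x^t / ∏ (α_i − t)_{n_i} dt` with `deg q ≤ |n|−1`. -/
theorem typeI_contour_representation
    (p : ℕ) (hp : 0 < p) (n : Fin p → ℕ) (hn : ∀ i, 0 < n i)
    (S : ℕ) (hS : S = ∑ i, n i)
    (α : Fin p → ℝ) (hα : ∀ i, -1 < α i)
    (hαint : ∀ i j, i ≠ j → ∀ z : ℤ, α i - α j ≠ (z : ℝ))
    (c r : ℝ) (hr : 0 < r)
    (henc : ∀ i, ∀ k < n i, |α i + k - c| < r)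
    (φ : ℂ → ℂ)
    (hφ : AnalyticOnNhd ℂ φ (Metric.closedBall (c : ℂ) r))
    (hφne : ∀ i, ∀ k < n i, φ ((α i : ℂ) + k) ≠ 0)
    (A : Fin p → Polynomial ℂ) (hA : ∀ i, (A i).natDegree ≤ n i - 1) :
    ∃! q : Polynomial ℂ, q.natDegree ≤ S - 1 ∧
      ∀ x : ℝ, 0 < x →
        ∑ i, (A i).eval (x : ℂ) * ((x ^ α i : ℝ) : ℂ) =
          (2 * Real.pi * Complex.I)⁻¹ *
            circleIntegral
              (fun t : ℂ => q.eval t * φ t * Complex.exp (t * Real.log x) /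
                ∏ i, pochC ((α i : ℂ) - t) (n i))
              (c : ℂ) r :=
  typeI_contour_representation_general p hp n hn S hS α hαint c r henc φ hφ hφne A hA
end

section
/- Let c ∈ ℝ and r > 0 be such that |α_i + k − c| < r for every i ∈ {1,…,p} and k ∈ {0,…,n_i−1}. Suppose q is a complex polynomial of degree at most |n⃗| − 1 such that (2πi)^{−1} ∮_{|t−c|=r} q(t) h(t) / ∏_{i=1}^p (α_i − t)_{n_i} dt = 0 for every complex polynomial h of degree at most |n⃗| − 2. Then q is a constant polynomial. -/
open Finset

/-!
The denominator `∏ (α_i − t)_{n_i}` is `∏_s (ρ_s − t)` over the `|n|` nodes `ρ_s = α_i + k`,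
which are distinct and lie inside the circle. For two nodes `ρ ≠ ρ'`, testing against
`h = ∏_{u ≠ s, s'} (ρ_u − X)`, of degree `|n| − 2`, leaves `∮ q(t) / ((t − ρ)(t − ρ')) dt`,
which by partial fractions and Cauchy's formula is `2πi` times the divided difference
`(q(ρ) − q(ρ')) / (ρ − ρ')`. Hence `q` takes one value at `|n|` distinct points, and having
degree below `|n|` it is constant.
-/

open Metric Real Complex Polynomial Function

lemma pochC_eq_prod (a : ℂ) (m : ℕ) : pochC a m = ∏ j ∈ range m, (a + j) := by
  induction m with
  | zero => simp [pochC]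
  | succ k ih => rw [pochC, ascPochhammer_succ_eval, ← pochC, ih, prod_range_succ]

theorem Polynomial.exists_eq_C_of_eval_eq {R : Type*} [CommRing R] [IsDomain R]
    {T : Type*} [Fintype T] {ρ : T → R} (hinj : Injective ρ) {q : R[X]}
    (hq : q.natDegree ≤ Fintype.card T - 1) (hconst : ∀ s s', q.eval (ρ s) = q.eval (ρ s')) :
    ∃ a, q = C a := by
  rcases isEmpty_or_nonempty T with hT | ⟨⟨s₀⟩⟩
  · exact ⟨_, eq_C_of_natDegree_le_zero (by simpa using hq)⟩
  · refine ⟨q.eval (ρ s₀), eq_of_natDegree_lt_card_of_eval_eq _ _ hinj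
      (fun s => by rw [eval_C, hconst s s₀]) ?_⟩
    have := Fintype.card_pos_iff.2 ⟨s₀⟩
    rw [natDegree_C]
    omega

theorem Polynomial.natDegree_prod_C_sub_X_le {R ι : Type*} [CommRing R] (s : Finset ι)
    (ρ : ι → R) : (∏ u ∈ s, (C (ρ u) - X)).natDegree ≤ #s :=
  calc _ ≤ ∑ u ∈ s, (C (ρ u) - X).natDegree := natDegree_prod_le _ _
    _ ≤ #s • 1 := sum_le_card_nsmul _ _ 1 fun _ _ =>
      (natDegree_sub_le _ _).trans (max_le (by simp) natDegree_X_le)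
    _ = #s := by simp

section Cauchy

variable {f : ℂ → ℂ} {c w w' : ℂ} {r : ℝ}

lemma circleIntegrable_sub_inv_mul (hf : DiffContOnCl ℂ f (ball c r)) (hw : w ∈ ball c r) :
    CircleIntegrable (fun t => (t - w)⁻¹ * f t) c r :=
  ContinuousOn.circleIntegrable (pos_of_mem_ball hw).le <|
    ((continuousOn_id.sub continuousOn_const).inv₀ fun _ ht =>
      sub_ne_zero.2 (sphere_disjoint_ball.ne_of_mem ht hw)).mul
    (hf.continuousOn_ball.mono sphere_subset_closedBall)

theorem circleIntegral_div_sub_mul_sub (hf : DiffContOnCl ℂ f (ball c r)) (hw : w ∈ ball c r)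
    (hw' : w' ∈ ball c r) (hne : w ≠ w') :
    (∮ t in C(c, r), f t / ((t - w) * (t - w'))) = 2 * π * I * ((f w - f w') / (w - w')) := by
  have hpartial : Set.EqOn (fun t => f t / ((t - w) * (t - w')))
      (fun t => (w - w')⁻¹ * ((t - w)⁻¹ * f t - (t - w')⁻¹ * f t)) (sphere c r) := by
    intro t ht
    have := sub_ne_zero.2 (sphere_disjoint_ball.ne_of_mem ht hw)
    have := sub_ne_zero.2 (sphere_disjoint_ball.ne_of_mem ht hw')
    have := sub_ne_zero.2 hne
    field_simp
    ring
  have hcauchy := hf.circleIntegral_sub_inv_smul hw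
  have hcauchy' := hf.circleIntegral_sub_inv_smul hw'
  simp only [smul_eq_mul] at hcauchy hcauchy'
  rw [circleIntegral.integral_congr (pos_of_mem_ball hw).le hpartial,
    circleIntegral.integral_const_mul, circleIntegral.integral_sub
      (circleIntegrable_sub_inv_mul hf hw) (circleIntegrable_sub_inv_mul hf hw'),
    hcauchy, hcauchy']
  ring

theorem apply_eq_apply_of_circleIntegral_mul_div_prod_eq_zero {T : Type*} [Fintype T]
    {ρ : T → ℂ} (hρ : ∀ s, ρ s ∈ ball c r) (hinj : Injective ρ)
    (hf : DiffContOnCl ℂ f (ball c r))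
    (horth : ∀ h : ℂ[X], h.natDegree ≤ Fintype.card T - 2 →
      (∮ t in C(c, r), f t * h.eval t / ∏ s, (ρ s - t)) = 0)
    (s s' : T) : f (ρ s) = f (ρ s') := by
  classical
  rcases eq_or_ne s s' with rfl | hne
  · rfl
  have hs' : s' ∈ univ.erase s := mem_erase.2 ⟨hne.symm, mem_univ _⟩
  set E := (univ.erase s).erase s'
  have hsplit (g : T → ℂ) : ∏ u, g u = g s * (g s' * ∏ u ∈ E, g u) := by
    rw [← mul_prod_erase _ _ (mem_univ s), ← mul_prod_erase _ _ hs']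
  set h := ∏ u ∈ E, (C (ρ u) - X)
  have hdeg : h.natDegree ≤ Fintype.card T - 2 := by
    refine (natDegree_prod_C_sub_X_le E ρ).trans_eq ?_
    rw [card_erase_of_mem hs', card_erase_of_mem (mem_univ s), card_univ, Nat.sub_sub]
  have hcancel : Set.EqOn (fun t => f t * h.eval t / ∏ u, (ρ u - t))
      (fun t => f t / ((t - ρ s) * (t - ρ s'))) (sphere c r) := by
    intro t ht
    have hnode (u : T) : ρ u - t ≠ 0 :=
      sub_ne_zero.2 (sphere_disjoint_ball.ne_of_mem ht (hρ u)).symm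
    have hE : ∏ u ∈ E, (ρ u - t) ≠ 0 := prod_ne_zero_iff.2 fun u _ => hnode u
    have hs : t - ρ s ≠ 0 := sub_ne_zero.2 (sphere_disjoint_ball.ne_of_mem ht (hρ s))
    have hs' : t - ρ s' ≠ 0 := sub_ne_zero.2 (sphere_disjoint_ball.ne_of_mem ht (hρ s'))
    simp only [h, eval_prod, eval_sub, eval_C, eval_X, hsplit fun u => ρ u - t]
    rw [div_eq_div_iff (mul_ne_zero (hnode s) (mul_ne_zero (hnode s') hE)) (mul_ne_zero hs hs')]
    ring
  have hdiv := horth h hdeg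
  rw [circleIntegral.integral_congr (pos_of_mem_ball (hρ s)).le hcancel,
    circleIntegral_div_sub_mul_sub hf (hρ s) (hρ s') (hinj.ne hne)] at hdiv
  simpa [two_pi_I_ne_zero, sub_eq_zero, sub_ne_zero.2 (hinj.ne hne)] using hdiv

end Cauchy

section PochhammerRoots

variable {ι : Type*} (n : ι → ℕ) (α : ι → ℝ)

noncomputable def pochRoot (s : Σ i, Fin (n i)) : ℂ := α s.1 + (s.2 : ℕ)

lemma pochRoot_injective (hα : ∀ i j, i ≠ j → ∀ z : ℤ, α i - α j ≠ z) :
    Injective (pochRoot n α) := by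
  rintro ⟨i, j⟩ ⟨i', j'⟩ h
  have hre : α i + (j : ℕ) = α i' + (j' : ℕ) := by simpa [pochRoot] using congrArg re h
  rcases eq_or_ne i i' with rfl | hii
  · have : (j : ℕ) = j' := by exact_mod_cast (add_left_cancel hre)
    rw [Fin.ext this]
  · exact absurd (by push_cast; linarith) (hα i i' hii ((j' : ℕ) - (j : ℕ)))

lemma pochRoot_mem_ball {c r : ℝ} (henc : ∀ i, ∀ k < n i, |α i + k - c| < r)
    (s : Σ i, Fin (n i)) : pochRoot n α s ∈ ball (c : ℂ) r := by
  rw [mem_ball, Complex.dist_eq, pochRoot, ← Complex.ofReal_natCast, ← Complex.ofReal_add,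
    ← Complex.ofReal_sub, norm_real, Real.norm_eq_abs]
  exact henc s.1 s.2 s.2.isLt

lemma prod_pochC_sub_eq_prod_pochRoot_sub [Fintype ι] (t : ℂ) :
    ∏ i, pochC (α i - t) (n i) = ∏ s, (pochRoot n α s - t) := by
  rw [← univ_sigma_univ, prod_sigma]
  refine prod_congr rfl fun i _ => ?_
  rw [pochC_eq_prod, ← Fin.prod_univ_eq_prod_range]
  refine prod_congr rfl fun j _ => ?_
  rw [pochRoot]
  ring

end PochhammerRoots

theorem contour_orthogonality_implies_constant_general
    (p : ℕ) (n : Fin p → ℕ)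
    (S : ℕ) (hS : S = ∑ i, n i)
    (α : Fin p → ℝ)
    (hαint : ∀ i j, i ≠ j → ∀ z : ℤ, α i - α j ≠ (z : ℝ))
    (c r : ℝ)
    (henc : ∀ i, ∀ k < n i, |α i + k - c| < r)
    (q : Polynomial ℂ) (hq : q.natDegree ≤ S - 1)
    (horth : ∀ h : Polynomial ℂ, h.natDegree ≤ S - 2 →
      (2 * Real.pi * Complex.I)⁻¹ *
        circleIntegral
          (fun t : ℂ => q.eval t * h.eval t / ∏ i, pochC ((α i : ℂ) - t) (n i))
          (c : ℂ) r = 0) :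
    ∃ a : ℂ, q = Polynomial.C a := by
  have hcard : Fintype.card (Σ i, Fin (n i)) = S := by simp [hS]
  have hconst := apply_eq_apply_of_circleIntegral_mul_div_prod_eq_zero
    (pochRoot_mem_ball n α henc) (pochRoot_injective n α hαint) q.differentiable.diffContOnCl
    fun h hh => by
      simpa [prod_pochC_sub_eq_prod_pochRoot_sub, two_pi_I_ne_zero] using horth h (hcard ▸ hh)
  exact exists_eq_C_of_eval_eq (pochRoot_injective n α hαint) (hcard ▸ hq) hconst

/-- If a polynomial `q` of degree at most `|n|−1` annihilates, under the contour
integral against `1/∏ (α_i − t)_{n_i}`, every polynomial of degree at most `|n|−2`,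
then `q` is a constant polynomial. -/
theorem contour_orthogonality_implies_constant
    (p : ℕ) (hp : 0 < p) (n : Fin p → ℕ) (hn : ∀ i, 0 < n i)
    (S : ℕ) (hS : S = ∑ i, n i)
    (α : Fin p → ℝ) (hα : ∀ i, -1 < α i)
    (hαint : ∀ i j, i ≠ j → ∀ z : ℤ, α i - α j ≠ (z : ℝ))
    (c r : ℝ) (hr : 0 < r)
    (henc : ∀ i, ∀ k < n i, |α i + k - c| < r)
    (q : Polynomial ℂ) (hq : q.natDegree ≤ S - 1)
    (horth : ∀ h : Polynomial ℂ, h.natDegree ≤ S - 2 →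
      (2 * Real.pi * Complex.I)⁻¹ *
        circleIntegral
          (fun t : ℂ => q.eval t * h.eval t / ∏ i, pochC ((α i : ℂ) - t) (n i))
          (c : ℂ) r = 0) :
    ∃ a : ℂ, q = Polynomial.C a :=
  contour_orthogonality_implies_constant_general p n S hS α hαint c r henc q hq horth
end

section
/- Let L be a monic real polynomial of degree |n⃗| satisfying the type II Laguerre orthogonality conditions: ∫_0^∞ x^j L(x) x^{α_i} e^{−x} dx = 0 for every i ∈ {1,…,p} and every j ∈ {0,…,n_i−1}. Then for every real s > 0: ∫_0^∞ L(x) e^{−x} x^{s−1} dx = (−1)^{|n⃗|} Γ(s) ∏_{i=1}^p (α_i+1−s)_{n_i}. -/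
/-!
Expanding `L` in monomials, the Mellin transform `∫₀^∞ L(x) e^{-x} x^{s-1} dx` equals `Γ(s) Q(s)`,
where `Q` is obtained from `L` by replacing each `X^k` by the rising factorial `(X)_k`, because
`∫₀^∞ x^k e^{-x} x^{s-1} dx = Γ(s + k) = Γ(s) (s)_k`. The polynomial `Q` is monic of the same
degree `|n⃗|` as `L`, and the orthogonality conditions say exactly that `Q` vanishes at the points
`α_i + 1 + j` (`j < n_i`), which are pairwise distinct since `α_i - α_j ∉ ℤ`. Hence
`Q = ∏_i ∏_{j < n_i} (X - α_i - 1 - j)`, and evaluating at `s` gives the product of Pochhammer symbols.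
-/

open Finset MeasureTheory

open Polynomial

lemma prod_sub_add_natCast_eq_neg_one_pow_mul_poch (s b : ℝ) (m : ℕ) :
    ∏ j : Fin m, (s - (b + j)) = (-1) ^ m * poch (b - s) m := by
  rw [poch, ← neg_sub, ascPochhammer_eval_neg_eq_descPochhammer,
    descPochhammer_eval_eq_prod_range, ← mul_assoc, ← pow_add, Even.neg_one_pow ⟨m, rfl⟩, one_mul,
    Fin.prod_univ_eq_prod_range (fun j : ℕ => s - (b + j))]
  exact prod_congr rfl fun j _ => by ring

lemma Real.Gamma_add_nat_eq_mul_ascPochhammer {s : ℝ} (hs : ∀ m : ℕ, s ≠ -m) (k : ℕ) :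
    Gamma (s + k) = Gamma s * (ascPochhammer ℝ k).eval s := by
  induction k with
  | zero => simp
  | succ k ih =>
    have hsk : s + k ≠ 0 := fun h => hs k (by linarith)
    rw [Nat.cast_succ, ← add_assoc, Gamma_add_one hsk, ih, ascPochhammer_succ_eval]
    ring

lemma exp_neg_mul_rpow_add_natCast_eqOn (s : ℝ) (k : ℕ) :
    Set.EqOn (fun x : ℝ => Real.exp (-x) * x ^ (s + k - 1))
      (fun x => x ^ k * Real.exp (-x) * x ^ (s - 1)) (Set.Ioi 0) := fun x (hx : 0 < x) => by
  simp only
  rw [show s + (k : ℝ) - 1 = k + (s - 1) by ring, Real.rpow_add hx, Real.rpow_natCast]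
  ring

lemma integrableOn_pow_mul_exp_neg_mul_rpow {s : ℝ} (hs : 0 < s) (k : ℕ) :
    IntegrableOn (fun x : ℝ => x ^ k * Real.exp (-x) * x ^ (s - 1)) (Set.Ioi 0) :=
  (Real.GammaIntegral_convergent (by positivity)).congr_fun
    (exp_neg_mul_rpow_add_natCast_eqOn s k) measurableSet_Ioi

lemma integral_pow_mul_exp_neg_mul_rpow {s : ℝ} (hs : 0 < s) (k : ℕ) :
    ∫ x in Set.Ioi (0 : ℝ), x ^ k * Real.exp (-x) * x ^ (s - 1) = Real.Gamma (s + k) := by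
  rw [Real.Gamma_eq_integral (by positivity)]
  exact (setIntegral_congr_fun measurableSet_Ioi (exp_neg_mul_rpow_add_natCast_eqOn s k)).symm

noncomputable def mellinPoly {R : Type*} [Semiring R] (L : R[X]) : R[X] :=
  ∑ k ∈ range (L.natDegree + 1), C (L.coeff k) * ascPochhammer R k

section mellinPoly

variable {R : Type*} [Semiring R] [Nontrivial R] [NoZeroDivisors R]

lemma natDegree_mellinPoly_le (L : R[X]) : (mellinPoly L).natDegree ≤ L.natDegree :=
  natDegree_sum_le_of_forall_le _ _ fun k hk =>
    (natDegree_C_mul_le _ _).trans ((ascPochhammer_natDegree R k).trans_le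
      (Nat.lt_succ_iff.mp (mem_range.mp hk)))

lemma coeff_mellinPoly_natDegree (L : R[X]) :
    (mellinPoly L).coeff L.natDegree = L.leadingCoeff := by
  rw [mellinPoly, finsetSum_coeff, sum_eq_single_of_mem _ (self_mem_range_succ _)]
  · have hlead : (ascPochhammer R L.natDegree).coeff L.natDegree = 1 := by
      simpa using (monic_ascPochhammer R L.natDegree).coeff_natDegree
    rw [coeff_C_mul, hlead, mul_one, leadingCoeff]
  · intro k hk hne
    have hlt : (ascPochhammer R k).natDegree < L.natDegree := by
      rw [ascPochhammer_natDegree]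
      exact lt_of_le_of_ne (Nat.lt_succ_iff.mp (mem_range.mp hk)) hne
    rw [coeff_C_mul, coeff_eq_zero_of_natDegree_lt hlt, mul_zero]

lemma Polynomial.Monic.natDegree_mellinPoly {L : R[X]} (hL : L.Monic) :
    (mellinPoly L).natDegree = L.natDegree :=
  natDegree_eq_of_le_of_coeff_ne_zero (natDegree_mellinPoly_le L)
    (by rw [coeff_mellinPoly_natDegree, hL.leadingCoeff]; exact one_ne_zero)

lemma Polynomial.Monic.monic_mellinPoly {L : R[X]} (hL : L.Monic) : (mellinPoly L).Monic := by
  rw [Monic.def, Polynomial.leadingCoeff, hL.natDegree_mellinPoly, coeff_mellinPoly_natDegree,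
    hL.leadingCoeff]

end mellinPoly

lemma integral_eval_mul_exp_neg_mul_rpow (L : ℝ[X]) {s : ℝ} (hs : 0 < s) :
    ∫ x in Set.Ioi (0 : ℝ), L.eval x * Real.exp (-x) * x ^ (s - 1) =
      Real.Gamma s * (mellinPoly L).eval s := by
  have hexpand : ∀ x : ℝ, L.eval x * Real.exp (-x) * x ^ (s - 1) =
      ∑ k ∈ range (L.natDegree + 1), L.coeff k * (x ^ k * Real.exp (-x) * x ^ (s - 1)) := by
    intro x
    rw [eval_eq_sum_range, sum_mul, sum_mul]
    exact sum_congr rfl fun k _ => by ring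
  simp_rw [hexpand]
  rw [integral_finsetSum _ fun k _ => (integrableOn_pow_mul_exp_neg_mul_rpow hs k).const_mul _,
    mellinPoly, eval_finsetSum, mul_sum]
  refine sum_congr rfl fun k _ => ?_
  rw [integral_const_mul, integral_pow_mul_exp_neg_mul_rpow hs k,
    Real.Gamma_add_nat_eq_mul_ascPochhammer (fun m => by linarith [m.cast_nonneg (α := ℝ)]),
    eval_mul, eval_C]
  ring

lemma eval_mellinPoly_add_one_add_natCast_eq_zero {L : ℝ[X]} {a : ℝ} (ha : -1 < a) {j : ℕ}
    (horth : ∫ x in Set.Ioi (0 : ℝ), x ^ j * L.eval x * x ^ a * Real.exp (-x) = 0) :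
    (mellinPoly L).eval (a + 1 + j) = 0 := by
  have hpos : 0 < a + 1 + j := by linarith [j.cast_nonneg (α := ℝ)]
  have hintegral : ∫ x in Set.Ioi (0 : ℝ), L.eval x * Real.exp (-x) * x ^ (a + 1 + j - 1) =
      ∫ x in Set.Ioi (0 : ℝ), x ^ j * L.eval x * x ^ a * Real.exp (-x) :=
    setIntegral_congr_fun measurableSet_Ioi fun x (hx : 0 < x) => by
      rw [show a + 1 + (j : ℝ) - 1 = a + j by ring, Real.rpow_add hx, Real.rpow_natCast]
      ring
  have h := integral_eval_mul_exp_neg_mul_rpow L hpos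
  rw [hintegral, horth] at h
  exact (mul_eq_zero.mp h.symm).resolve_left (Real.Gamma_pos_of_pos hpos).ne'

lemma Polynomial.eq_prod_X_sub_C_of_monic_of_eval_eq_zero {K ι : Type*} [Field K] [Fintype ι]
    {Q : K[X]} {f : ι → K} (hQ : Q.Monic) (hdeg : Q.natDegree ≤ Fintype.card ι)
    (hf : Function.Injective f) (hroot : ∀ i, Q.eval (f i) = 0) : Q = ∏ i, (X - C (f i)) :=
  eq_of_monic_of_dvd_of_natDegree_le (monic_prod_of_monic _ _ fun i _ => monic_X_sub_C (f i)) hQ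
    (Fintype.prod_dvd_of_coprime (pairwise_coprime_X_sub_C hf) fun i =>
      dvd_iff_isRoot.mpr (hroot i))
    (by rwa [natDegree_finsetProd_X_sub_C_eq_card, card_univ])

lemma injective_sigma_add_natCast {ι : Type*} {n : ι → ℕ} {β : ι → ℝ}
    (hβ : ∀ i j, i ≠ j → ∀ z : ℤ, β i - β j ≠ z) :
    Function.Injective fun ij : (i : ι) × Fin (n i) => β ij.1 + (ij.2 : ℕ) := by
  rintro ⟨i, j⟩ ⟨i', j'⟩ h
  simp only at h
  by_cases hii : i = i'
  · subst hii
    exact congrArg _ (Fin.ext (by exact_mod_cast (add_left_cancel h : ((j : ℕ) : ℝ) = j')))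
  · exact absurd (show β i - β i' = (((j' : ℕ) : ℤ) - (j : ℕ) : ℤ) by push_cast; linarith)
      (hβ i i' hii _)

theorem laguerreI_typeII_mellin_general
    (p : ℕ) (n : Fin p → ℕ)
    (S : ℕ) (hS : S = ∑ i, n i)
    (α : Fin p → ℝ) (hα : ∀ i, -1 < α i)
    (hαint : ∀ i j, i ≠ j → ∀ z : ℤ, α i - α j ≠ (z : ℝ))
    (L : Polynomial ℝ) (hmonic : L.Monic) (hdeg : L.natDegree = S)
    (horth : ∀ i, ∀ j < n i,
      ∫ x in Set.Ioi (0 : ℝ), x ^ j * L.eval x * x ^ α i * Real.exp (-x) = 0) :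
    ∀ s : ℝ, 0 < s →
      ∫ x in Set.Ioi (0 : ℝ), L.eval x * Real.exp (-x) * x ^ (s - 1) =
        (-1 : ℝ) ^ S * Real.Gamma s * ∏ i, poch (α i + 1 - s) (n i) := by
  intro s hs
  set root : (i : Fin p) × Fin (n i) → ℝ := fun ij => (α ij.1 + 1) + (ij.2 : ℕ)
  have hinj : Function.Injective root := injective_sigma_add_natCast (β := (α · + 1))
    fun i j hij z => by simpa using hαint i j hij z
  have hvanish : ∀ ij, (mellinPoly L).eval (root ij) = 0 := fun ⟨i, j⟩ =>
    eval_mellinPoly_add_one_add_natCast_eq_zero (hα i) (horth i j j.isLt)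
  have hQ : mellinPoly L = ∏ ij, (X - C (root ij)) := by
    refine eq_prod_X_sub_C_of_monic_of_eval_eq_zero hmonic.monic_mellinPoly ?_ hinj hvanish
    rw [hmonic.natDegree_mellinPoly, hdeg, hS, Fintype.card_sigma]
    simp
  rw [integral_eval_mul_exp_neg_mul_rpow L hs, hQ, eval_prod, Fintype.prod_sigma]
  simp only [root, eval_sub, eval_X, eval_C, prod_sub_add_natCast_eq_neg_one_pow_mul_poch,
    prod_mul_distrib, prod_pow_eq_pow_sum, hS]
  ring

/-- The Mellin transform of the weighted type II Laguerre (first kind) multiple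
orthogonal polynomial: `∫_0^∞ L(x) e^{−x} x^{s−1} dx = (−1)^{|n|} Γ(s) ∏ (α_i+1−s)_{n_i}`. -/
theorem laguerreI_typeII_mellin
    (p : ℕ) (hp : 0 < p) (n : Fin p → ℕ) (hn : ∀ i, 0 < n i)
    (S : ℕ) (hS : S = ∑ i, n i)
    (α : Fin p → ℝ) (hα : ∀ i, -1 < α i)
    (hαint : ∀ i j, i ≠ j → ∀ z : ℤ, α i - α j ≠ (z : ℝ))
    (L : Polynomial ℝ) (hmonic : L.Monic) (hdeg : L.natDegree = S)
    (horth : ∀ i, ∀ j < n i,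
      ∫ x in Set.Ioi (0 : ℝ), x ^ j * L.eval x * x ^ α i * Real.exp (-x) = 0) :
    ∀ s : ℝ, 0 < s →
      ∫ x in Set.Ioi (0 : ℝ), L.eval x * Real.exp (-x) * x ^ (s - 1) =
        (-1 : ℝ) ^ S * Real.Gamma s * ∏ i, poch (α i + 1 - s) (n i) :=
  laguerreI_typeII_mellin_general p n S hS α hα hαint L hmonic hdeg horth
end

section
/- Let β > −1 and N ∈ ℕ with 2 ≤ |n⃗| ≤ N. Let Q be a monic real polynomial of degree |n⃗| satisfying the type II Hahn orthogonality conditions: ∑_{k=0}^N Q(k) · [Γ(k+α_i+j+1)/Γ(k+1)] · [Γ(β+N−k+1)/Γ(N−k+1)] = 0 for every i ∈ {1,…,p} and every j ∈ {0,…,n_i−1}. Then for every real s > 0: ∑_{k=0}^N Q(k) · [Γ(N−k+β+1)/Γ(N−k+1)] · [Γ(k+s)/Γ(k+1)] = [(−1)^{|n⃗|} Γ(|n⃗|+β+1) / ((N−|n⃗|)! ∏_{i=1}^p (α_i+β+|n⃗|+1)_{n_i})] · [Γ(s) Γ(s+N+β+1) / Γ(s+|n⃗|+β+1)] · ∏_{i=1}^p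 (α_i+1−s)_{n_i}. -/
open Finset

/-
Both sides are `Γ s` times a polynomial of degree at most `N` in `s`: on the left
`Γ(k + s) / Γ(k + 1) = Γ(s) (s)_k / k!`, on the right
`Γ(s + N + β + 1) / Γ(s + |n| + β + 1) = (s + |n| + β + 1)_{N - |n|}`. So it suffices to compare the
two polynomials at `N + 1` distinct points.
At the `|n|` points `α i + j + 1` (`j < n i`) both vanish: the left one by the orthogonality
conditions, the right one through the factor `(α i + 1 - s)_{n i}`; these points are distinct
because `α i - α j ∉ ℤ`.
At the `N - |n| + 1` points `-(β + |n| + m)`, the identity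
`Γ(N - k + β + 1) (-b)_k = (-1)^k Γ(b + 1) (b + 1 - k)_{N - |n| - m}` for `b = β + |n| + m` turns the
left polynomial into an alternating binomial sum, i.e. an `N`-th forward difference, of
`k ↦ Q(k) (b + 1 - k)_{N - |n| - m}`, a polynomial of degree `N - m`. It is therefore
`(-1)^|n| Γ(β + |n| + 1)` for `m = 0` and `0` otherwise, and so is the right side, whose factor
`(1 - m)_{N - |n|}` vanishes for `m > 0`.
-/

open Polynomial fwdDiff
open scoped Nat

theorem neg_one_pow_mul_neg_one_pow_sub {R : Type*} [Monoid R] [HasDistribNeg R] {k N : ℕ}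
    (hk : k ≤ N) : (-1 : R) ^ N * (-1) ^ (N - k) = (-1) ^ k := by
  obtain ⟨d, rfl⟩ := Nat.exists_eq_add_of_le hk
  rw [Nat.add_sub_cancel_left, pow_add, mul_assoc, ← pow_add, ← two_mul, pow_mul, neg_one_sq,
    one_pow, mul_one]

theorem Polynomial.fwdDiff_iter_eval_eq_factorial_mul_coeff {R : Type*} [CommRing R]
    {P : R[X]} {N : ℕ} (hP : P.natDegree ≤ N) (x : R) :
    (Δ_[1])^[N] P.eval x = N ! * P.coeff N := by
  rcases hP.lt_or_eq with hlt | rfl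
  · simp [P.fwdDiff_iter_eq_zero_of_degree_lt hlt, coeff_eq_zero_of_natDegree_lt hlt]
  · simp [P.fwdDiff_iter_degree_eq_factorial, mul_comm]

theorem Polynomial.sum_neg_one_pow_mul_choose_mul_eval {R : Type*} [CommRing R]
    {P : R[X]} {N : ℕ} (hP : P.natDegree ≤ N) :
    ∑ k ∈ range (N + 1), (-1) ^ k * (N.choose k : R) * P.eval (k : R) =
      (-1) ^ N * N ! * P.coeff N := by
  have h := fwdDiff_iter_eq_sum_shift (1 : R) P.eval N 0
  rw [fwdDiff_iter_eval_eq_factorial_mul_coeff hP] at h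
  rw [mul_assoc, h, mul_sum]
  refine sum_congr rfl fun k hk => ?_
  rw [← neg_one_pow_mul_neg_one_pow_sub (Nat.lt_succ_iff.mp (mem_range.mp hk))]
  simp only [zsmul_eq_mul, nsmul_eq_mul, mul_one, zero_add]
  push_cast
  ring

theorem Polynomial.natDegree_C_sub_X {R : Type*} [Ring R] [Nontrivial R] (a : R) :
    (C a - X : R[X]).natDegree = 1 := by
  rw [← neg_sub, natDegree_neg, natDegree_X_sub_C]

section ReflectedPochhammer

variable {R : Type*} [CommRing R] [IsDomain R]

theorem Polynomial.natDegree_ascPochhammer_comp_C_sub_X (a : R) (m : ℕ) :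
    ((ascPochhammer R m).comp (C a - X)).natDegree = m := by
  rw [natDegree_comp, ascPochhammer_natDegree, natDegree_C_sub_X, mul_one]

theorem Polynomial.leadingCoeff_ascPochhammer_comp_C_sub_X (a : R) (m : ℕ) :
    ((ascPochhammer R m).comp (C a - X)).leadingCoeff = (-1) ^ m := by
  rw [leadingCoeff_comp (by rw [natDegree_C_sub_X]; exact one_ne_zero), ← neg_sub,
    leadingCoeff_neg, leadingCoeff_X_sub_C, (monic_ascPochhammer R m).leadingCoeff, one_mul,
    ascPochhammer_natDegree]

end ReflectedPochhammer

theorem Real.Gamma_add_nat_eq_poch_mul {x : ℝ} (hx : 0 < x) (m : ℕ) :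
    Real.Gamma (x + m) = poch x m * Real.Gamma x := by
  induction m with
  | zero => simp [poch]
  | succ m ih =>
    rw [Nat.cast_succ, ← add_assoc, Real.Gamma_add_one (by positivity), ih, poch, poch,
      ascPochhammer_succ_right]
    simp only [eval_mul, eval_add, eval_X, eval_natCast]
    ring

theorem Real.Gamma_add_mul_poch_comm {y : ℝ} {k L : ℕ} (hk : 0 < y + k) (hL : 0 < y + L) :
    Real.Gamma (y + L) * poch y k = Real.Gamma (y + k) * poch y L := by
  wlog hkL : k ≤ L generalizing k L
  · exact (this hL hk (le_of_not_ge hkL)).symm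
  obtain ⟨d, rfl⟩ := Nat.exists_eq_add_of_le hkL
  have hsplit : poch y (k + d) = poch y k * poch (y + k) d := by
    simp [poch, ← ascPochhammer_mul, eval_comp]
  rw [hsplit, Nat.cast_add, ← add_assoc, Real.Gamma_add_nat_eq_poch_mul hk]
  ring

theorem poch_neg (b : ℝ) (k : ℕ) : poch (-b) k = (-1) ^ k * poch (b + 1 - k) k := by
  rw [poch, poch, ascPochhammer_eval_neg_eq_descPochhammer, descPochhammer_eval_eq_ascPochhammer,
    sub_add_eq_add_sub]

noncomputable def hahnMellinPoly (Q : ℝ[X]) (β : ℝ) (N : ℕ) : ℝ[X] :=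
  ∑ k ∈ range (N + 1),
    C (Q.eval (k : ℝ) * (Real.Gamma ((N : ℝ) - k + β + 1) / Real.Gamma ((N : ℝ) - k + 1)) / k !) *
      ascPochhammer ℝ k

section HahnMellinPoly

variable {Q : ℝ[X]} {β : ℝ} {N : ℕ}

theorem natDegree_hahnMellinPoly_le : (hahnMellinPoly Q β N).natDegree ≤ N := by
  refine natDegree_sum_le_of_forall_le _ _ fun k hk => (natDegree_C_mul_le _ _).trans ?_
  rw [ascPochhammer_natDegree]
  exact Nat.lt_succ_iff.mp (mem_range.mp hk)

theorem eval_hahnMellinPoly (x : ℝ) :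
    (hahnMellinPoly Q β N).eval x =
      ∑ k ∈ range (N + 1),
        Q.eval (k : ℝ) * (Real.Gamma ((N : ℝ) - k + β + 1) / Real.Gamma ((N : ℝ) - k + 1)) / k ! *
          poch x k := by
  simp [hahnMellinPoly, eval_finsetSum, poch]

theorem sum_mul_Gamma_div_eq_Gamma_mul_eval_hahnMellinPoly {x : ℝ} (hx : 0 < x) :
    ∑ k ∈ range (N + 1),
        Q.eval (k : ℝ) * (Real.Gamma ((N : ℝ) - k + β + 1) / Real.Gamma ((N : ℝ) - k + 1)) *
          (Real.Gamma ((k : ℝ) + x) / Real.Gamma ((k : ℝ) + 1)) =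
      Real.Gamma x * (hahnMellinPoly Q β N).eval x := by
  rw [eval_hahnMellinPoly, mul_sum]
  refine sum_congr rfl fun k _ => ?_
  rw [add_comm (k : ℝ) x, Real.Gamma_add_nat_eq_poch_mul hx, Real.Gamma_nat_eq_factorial]
  ring

theorem eval_hahnMellinPoly_eq_zero_of_orthogonal {x : ℝ} (hx : 0 < x)
    (horth : ∑ k ∈ range (N + 1),
        Q.eval (k : ℝ) * (Real.Gamma ((k : ℝ) + x) / Real.Gamma ((k : ℝ) + 1)) *
          (Real.Gamma (β + N - k + 1) / Real.Gamma ((N : ℝ) - k + 1)) = 0) :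
    (hahnMellinPoly Q β N).eval x = 0 := by
  have hsum := sum_mul_Gamma_div_eq_Gamma_mul_eval_hahnMellinPoly (Q := Q) (β := β) (N := N) hx
  refine (mul_eq_zero_iff_left (Real.Gamma_pos_of_pos hx).ne').mp ?_
  rw [← hsum, ← horth]
  refine sum_congr rfl fun k _ => ?_
  ring_nf

theorem eval_hahnMellinPoly_neg {b : ℝ} {L : ℕ} (hb : -1 < b) (hβ : -1 < β)
    (hbL : b + L = β + N) (hQ : Q.natDegree + L ≤ N) :
    (hahnMellinPoly Q β N).eval (-b) =
      (-1) ^ N * Real.Gamma (b + 1) * (Q * (ascPochhammer ℝ L).comp (C (b + 1) - X)).coeff N := by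
  have hterm : ∀ k ∈ range (N + 1),
      Q.eval (k : ℝ) * (Real.Gamma ((N : ℝ) - k + β + 1) / Real.Gamma ((N : ℝ) - k + 1)) / k ! *
          poch (-b) k =
        Real.Gamma (b + 1) / N ! *
          ((-1) ^ k * N.choose k * (Q * (ascPochhammer ℝ L).comp (C (b + 1) - X)).eval (k : ℝ)) := by
    intro k hk
    have hkN : k ≤ N := Nat.lt_succ_iff.mp (mem_range.mp hk)
    have hkN' : (k : ℝ) ≤ N := by exact_mod_cast hkN
    have hG := Real.Gamma_add_mul_poch_comm (y := b + 1 - k) (k := k) (L := L)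
      (by linarith) (by linarith)
    rw [show b + 1 - k + L = N - k + β + 1 by linarith, sub_add_cancel] at hG
    have hfac : Real.Gamma ((N : ℝ) - k + 1) = (N - k) ! := by
      rw [← Nat.cast_sub hkN, Real.Gamma_nat_eq_factorial]
    have hchoose : (N.choose k : ℝ) * k ! * (N - k) ! = N ! := by
      exact_mod_cast Nat.choose_mul_factorial_mul_factorial hkN
    rw [poch_neg, hfac, eval_mul, eval_comp]
    simp only [eval_sub, eval_C, eval_X]
    have hC : (N.choose k : ℝ) ≠ 0 := by exact_mod_cast (Nat.choose_pos hkN).ne'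
    rw [← hchoose, ← poch]
    set G := Real.Gamma ((N : ℝ) - k + β + 1)
    field_simp
    linear_combination Q.eval (k : ℝ) * hG
  rw [eval_hahnMellinPoly, sum_congr rfl hterm, ← mul_sum, sum_neg_one_pow_mul_choose_mul_eval]
  · field_simp
  · refine natDegree_mul_le.trans ?_
    rwa [natDegree_ascPochhammer_comp_C_sub_X]

theorem eval_hahnMellinPoly_neg_of_monic {S m : ℕ} (hβ : -1 < β)
    (hQ : Q.Monic) (hQS : Q.natDegree = S) (hm : S + m ≤ N) :
    (hahnMellinPoly Q β N).eval (-(β + S + m)) =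
      if m = 0 then (-1) ^ S * Real.Gamma (β + S + 1) else 0 := by
  have hb : -1 < β + S + m := by
    have : (0 : ℝ) ≤ S + m := by positivity
    linarith
  rw [eval_hahnMellinPoly_neg (L := N - S - m) hb hβ
    (by rw [Nat.sub_sub, Nat.cast_sub hm]; push_cast; ring) (by omega)]
  set F := Q * (ascPochhammer ℝ (N - S - m)).comp (C (β + S + m + 1) - X)
  have hFdeg : F.natDegree = N - m := by
    rw [natDegree_mul hQ.ne_zero (leadingCoeff_ne_zero.mp (by
        rw [leadingCoeff_ascPochhammer_comp_C_sub_X]; simp)),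
      natDegree_ascPochhammer_comp_C_sub_X]
    omega
  rcases Nat.eq_zero_or_pos m with rfl | hm0
  · have hFN : F.coeff N = F.leadingCoeff := by rw [leadingCoeff, hFdeg, Nat.sub_zero]
    rw [hFN, leadingCoeff_mul, hQ.leadingCoeff, leadingCoeff_ascPochhammer_comp_C_sub_X, one_mul,
      Nat.sub_zero, if_pos rfl, mul_right_comm, neg_one_pow_mul_neg_one_pow_sub (by omega)]
    push_cast
    ring_nf
  · rw [if_neg hm0.ne', coeff_eq_zero_of_natDegree_lt (by omega), mul_zero]

end HahnMellinPoly

noncomputable def hahnMellinRhsPoly {p : ℕ} (n : Fin p → ℕ) (α : Fin p → ℝ) (β : ℝ) (S N : ℕ) :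
    ℝ[X] :=
  (ascPochhammer ℝ (N - S)).comp (X + C ((S : ℝ) + β + 1)) *
    ∏ i, (ascPochhammer ℝ (n i)).comp (C (α i + 1) - X)

section HahnMellinRhsPoly

variable {p : ℕ} {n : Fin p → ℕ} {α : Fin p → ℝ} {β : ℝ} {S N : ℕ}

theorem eval_hahnMellinRhsPoly (x : ℝ) :
    (hahnMellinRhsPoly n α β S N).eval x =
      poch (x + S + β + 1) (N - S) * ∏ i, poch (α i + 1 - x) (n i) := by
  simp [hahnMellinRhsPoly, eval_prod, poch, add_assoc]

theorem natDegree_hahnMellinRhsPoly_le :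
    (hahnMellinRhsPoly n α β S N).natDegree ≤ N - S + ∑ i, n i := by
  refine natDegree_mul_le.trans (add_le_add ?_ ?_)
  · rw [natDegree_comp, ascPochhammer_natDegree, natDegree_X_add_C, mul_one]
  · refine (natDegree_prod_le _ _).trans (sum_le_sum fun i _ => ?_)
    rw [natDegree_ascPochhammer_comp_C_sub_X]

theorem eval_hahnMellinRhsPoly_of_lt (i : Fin p) {j : ℕ} (hj : j < n i) :
    (hahnMellinRhsPoly n α β S N).eval (α i + j + 1) = 0 := by
  rw [eval_hahnMellinRhsPoly, prod_eq_zero (mem_univ i), mul_zero]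
  rw [show α i + 1 - (α i + j + 1) = -(j : ℝ) by ring, poch,
    ascPochhammer_eval_neg_coe_nat_of_lt hj]

theorem eval_hahnMellinRhsPoly_neg {m : ℕ} (hm : m ≤ N - S) :
    (hahnMellinRhsPoly n α β S N).eval (-(β + S + m)) =
      if m = 0 then (N - S) ! * ∏ i, poch (α i + β + S + 1) (n i) else 0 := by
  rw [eval_hahnMellinRhsPoly]
  rcases Nat.eq_zero_or_pos m with rfl | hm0
  · rw [if_pos rfl, show -(β + S + ((0 : ℕ) : ℝ)) + S + β + 1 = 1 by push_cast; ring, poch,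
      ascPochhammer_eval_one]
    push_cast
    congr 1
    refine prod_congr rfl fun i _ => ?_
    ring_nf
  · rw [if_neg hm0.ne', show -(β + S + m) + S + β + 1 = -((m - 1 : ℕ) : ℝ) by
      rw [Nat.cast_sub hm0]; push_cast; ring, poch,
      ascPochhammer_eval_neg_coe_nat_of_lt (by omega), zero_mul]

end HahnMellinRhsPoly

def hahnNodes {p : ℕ} (n : Fin p → ℕ) (α : Fin p → ℝ) (β : ℝ) (S K : ℕ) :
    (Σ i, Fin (n i)) ⊕ Fin K → ℝ :=
  Sum.elim (fun x => α x.1 + x.2 + 1) (fun m => -(β + S + m))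

theorem hahnNodes_injective {p : ℕ} {n : Fin p → ℕ} {α : Fin p → ℝ} {β : ℝ} {S K : ℕ}
    (hα : ∀ i, -1 < α i) (hαint : ∀ i j, i ≠ j → ∀ z : ℤ, α i - α j ≠ (z : ℝ))
    (hβ : -1 < β) (hS : 0 < S) : Function.Injective (hahnNodes n α β S K) := by
  have hpos : ∀ (i : Fin p) (j : ℕ), 0 < α i + j + 1 := fun i j => by
    linarith [hα i, j.cast_nonneg (α := ℝ)]
  have hneg : ∀ m : ℕ, -(β + S + m) < 0 := fun m => by
    have : (1 : ℝ) ≤ S := by exact_mod_cast hS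
    have : (0 : ℝ) ≤ m := m.cast_nonneg
    linarith
  rintro (⟨i, j⟩ | m) (⟨i', j'⟩ | m') h <;> simp only [hahnNodes, Sum.elim_inl, Sum.elim_inr] at h
  · by_cases hii : i = i'
    · subst hii
      have : (j : ℕ) = j' := by exact_mod_cast (add_left_cancel (add_right_cancel h))
      rw [Fin.ext this]
    · exact absurd (by push_cast; linarith) (hαint i i' hii ((j' : ℤ) - j))
  · linarith [hpos i j, hneg m']
  · linarith [hpos i' j', hneg m]
  · exact congrArg Sum.inr (Fin.ext (by simpa using h))

theorem hahnMellinPoly_eq_C_mul_rhsPoly {p : ℕ} {n : Fin p → ℕ} {S : ℕ} (hS : S = ∑ i, n i)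
    {α : Fin p → ℝ} (hα : ∀ i, -1 < α i)
    (hαint : ∀ i j, i ≠ j → ∀ z : ℤ, α i - α j ≠ (z : ℝ))
    {β : ℝ} (hβ : -1 < β) {N : ℕ} (hS0 : 0 < S) (hSN : S ≤ N)
    {Q : ℝ[X]} (hmonic : Q.Monic) (hdeg : Q.natDegree = S)
    (hzero : ∀ i, ∀ j < n i, (hahnMellinPoly Q β N).eval (α i + j + 1) = 0) :
    hahnMellinPoly Q β N =
      C ((-1 : ℝ) ^ S * Real.Gamma (S + β + 1) /
          ((N - S) ! * ∏ i, poch (α i + β + S + 1) (n i))) *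
        hahnMellinRhsPoly n α β S N := by
  have hcard : #(univ : Finset ((Σ i, Fin (n i)) ⊕ Fin (N - S + 1))) = N + 1 := by
    simp only [card_univ, Fintype.card_sum, Fintype.card_sigma, Fintype.card_fin, ← hS]
    omega
  have hdeg_lt (P : ℝ[X]) (hP : P.natDegree ≤ N) :
      P.degree < #(univ : Finset ((Σ i, Fin (n i)) ⊕ Fin (N - S + 1))) := by
    rw [hcard]
    exact (degree_le_of_natDegree_le hP).trans_lt (WithBot.coe_lt_coe.mpr N.lt_succ_self)
  refine eq_of_degrees_lt_of_eval_index_eq _ (hahnNodes_injective hα hαint hβ hS0).injOn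
    (hdeg_lt _ natDegree_hahnMellinPoly_le) (hdeg_lt _ ?_) ?_
  · refine (natDegree_C_mul_le _ _).trans (natDegree_hahnMellinRhsPoly_le.trans ?_)
    omega
  rintro (⟨i, j⟩ | m) -
  · simp only [hahnNodes, Sum.elim_inl]
    rw [hzero i j j.2, eval_mul, eval_hahnMellinRhsPoly_of_lt i j.2, mul_zero]
  · simp only [hahnNodes, Sum.elim_inr]
    rw [eval_hahnMellinPoly_neg_of_monic hβ hmonic hdeg (by omega), eval_mul, eval_C,
      eval_hahnMellinRhsPoly_neg (by omega)]
    split_ifs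
    · have hS1 : (1 : ℝ) ≤ S := by exact_mod_cast hS0
      have hprod : 0 < ∏ i, poch (α i + β + S + 1) (n i) := prod_pos fun i _ =>
        ascPochhammer_pos _ _ (by linarith [hα i])
      field_simp
      ring_nf
    · rw [mul_zero]

theorem hahn_typeII_discrete_mellin_general
    (p : ℕ) (n : Fin p → ℕ)
    (S : ℕ) (hS : S = ∑ i, n i)
    (α : Fin p → ℝ) (hα : ∀ i, -1 < α i)
    (hαint : ∀ i j, i ≠ j → ∀ z : ℤ, α i - α j ≠ (z : ℝ))
    (β : ℝ) (hβ : -1 < β) (N : ℕ) (hS2 : 2 ≤ S) (hSN : S ≤ N)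
    (Q : Polynomial ℝ) (hmonic : Q.Monic) (hdeg : Q.natDegree = S)
    (horth : ∀ i, ∀ j < n i,
      ∑ k ∈ range (N + 1),
        Q.eval (k : ℝ) * (Real.Gamma ((k : ℝ) + α i + j + 1) / Real.Gamma ((k : ℝ) + 1)) *
          (Real.Gamma (β + N - k + 1) / Real.Gamma ((N : ℝ) - k + 1)) = 0) :
    ∀ s : ℝ, 0 < s →
      ∑ k ∈ range (N + 1),
        Q.eval (k : ℝ) * (Real.Gamma ((N : ℝ) - k + β + 1) / Real.Gamma ((N : ℝ) - k + 1)) *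
          (Real.Gamma ((k : ℝ) + s) / Real.Gamma ((k : ℝ) + 1)) =
        ((-1 : ℝ) ^ S * Real.Gamma (S + β + 1) /
            ((Nat.factorial (N - S) : ℝ) * ∏ i, poch (α i + β + S + 1) (n i))) *
          (Real.Gamma s * Real.Gamma (s + N + β + 1) / Real.Gamma (s + S + β + 1)) *
          ∏ i, poch (α i + 1 - s) (n i) := by
  intro s hs
  have hzero : ∀ i, ∀ j < n i, (hahnMellinPoly Q β N).eval (α i + j + 1) = 0 := fun i j hj =>
    eval_hahnMellinPoly_eq_zero_of_orthogonal (by linarith [hα i, j.cast_nonneg (α := ℝ)])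
      (by simpa only [add_assoc] using horth i j hj)
  have hx : 0 < s + S + β + 1 := by
    have : (0 : ℝ) ≤ S := S.cast_nonneg
    linarith
  rw [sum_mul_Gamma_div_eq_Gamma_mul_eval_hahnMellinPoly hs,
    hahnMellinPoly_eq_C_mul_rhsPoly hS hα hαint hβ (by omega) hSN hmonic hdeg hzero, eval_mul,
    eval_C, eval_hahnMellinRhsPoly,
    show s + N + β + 1 = s + S + β + 1 + (N - S : ℕ) by push_cast [Nat.cast_sub hSN]; ring,
    Real.Gamma_add_nat_eq_poch_mul hx]
  field_simp [(Real.Gamma_pos_of_pos hx).ne']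

/-- The discrete Mellin transform of the weighted type II Hahn polynomial. -/
theorem hahn_typeII_discrete_mellin
    (p : ℕ) (hp : 0 < p) (n : Fin p → ℕ) (hn : ∀ i, 0 < n i)
    (S : ℕ) (hS : S = ∑ i, n i)
    (α : Fin p → ℝ) (hα : ∀ i, -1 < α i)
    (hαint : ∀ i j, i ≠ j → ∀ z : ℤ, α i - α j ≠ (z : ℝ))
    (β : ℝ) (hβ : -1 < β) (N : ℕ) (hS2 : 2 ≤ S) (hSN : S ≤ N)
    (Q : Polynomial ℝ) (hmonic : Q.Monic) (hdeg : Q.natDegree = S)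
    (horth : ∀ i, ∀ j < n i,
      ∑ k ∈ range (N + 1),
        Q.eval (k : ℝ) * (Real.Gamma ((k : ℝ) + α i + j + 1) / Real.Gamma ((k : ℝ) + 1)) *
          (Real.Gamma (β + N - k + 1) / Real.Gamma ((N : ℝ) - k + 1)) = 0) :
    ∀ s : ℝ, 0 < s →
      ∑ k ∈ range (N + 1),
        Q.eval (k : ℝ) * (Real.Gamma ((N : ℝ) - k + β + 1) / Real.Gamma ((N : ℝ) - k + 1)) *
          (Real.Gamma ((k : ℝ) + s) / Real.Gamma ((k : ℝ) + 1)) =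
        ((-1 : ℝ) ^ S * Real.Gamma (S + β + 1) /
            ((Nat.factorial (N - S) : ℝ) * ∏ i, poch (α i + β + S + 1) (n i))) *
          (Real.Gamma s * Real.Gamma (s + N + β + 1) / Real.Gamma (s + S + β + 1)) *
          ∏ i, poch (α i + 1 - s) (n i) :=
  hahn_typeII_discrete_mellin_general p n S hS α hα hαint β hβ N hS2 hSN Q hmonic hdeg horth
end
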